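/- arXiv:2309.11631 — 3 statements merged into one kernel-verified Lean document; each statement's English description precedes it below -/
import Mathlib

section
/- If I is an ideal of R generated by homogeneous elements of a single degree d and ht I > 0, then reg I^{n-1}/I^n ≥ dn − 1 for all n ≥ 1. -/
/-!
Common setup.

We encode a finitely generated standard graded algebra `R` over a field `k` by the data
`StdGraded k R`: the grading `deg : ℤ → Submodule k R` (an internal direct sum, vanishing
in negative degrees, with `deg 0 = k·1` and `deg (n+1) = deg 1 * deg n`), together with a
finite family `gen` of degree-one elements spanning `deg 1` over `k` (so `R` is generated
in degree one by finitely many elements).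

For homogeneous ideals `B ⊆ A` of `R`, the Castelnuovo–Mumford regularity of the graded
module `A/B` is formalized through the classical characterization
`reg M = max { j - i : β_{i,j}(M) ≠ 0 }`, where `β_{i,j}(M) = dim_k (Tor_i^S(M, k))_j` is
the graded Betti number over a polynomial ring `S = k[X_1, …, X_r]` mapping onto `R` via
the chosen degree-one generators.  These Betti numbers are computed honestly as the
homology of the graded Koszul complex `K(x_1, …, x_r; M)` on the degree-one generators:
`TorNonzero G A B i j` says that this Koszul homology of `A/B` is nonzero in homological
degree `i` and internal degree `j`.  This agrees with the local cohomology definition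
`reg M = max { a(H_m^i(M)) + i : i ≥ 0 }` for finitely generated graded modules over a
standard graded algebra.  Similarly, by a theorem of Trung, the partial regularity
`reg_t M = max { a(H_m^i(M)) + i : i ≤ t }` equals
`max { j - i : β_{i,j}(M) ≠ 0, i ≥ r - t }`, which is taken as the definition
`preg` below.
-/

structure StdGraded (k R : Type) [Field k] [CommRing R] [Algebra k R] where
  deg : ℤ → Submodule k R
  internal : DirectSum.IsInternal deg
  bot_of_neg : ∀ i : ℤ, i < 0 → deg i = ⊥
  deg_zero : deg 0 = 1
  standard : ∀ n : ℕ, deg ((n : ℤ) + 1) = deg 1 * deg (n : ℤ)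
  ngens : ℕ
  gen : Fin ngens → R
  gen_mem : ∀ i, gen i ∈ deg 1
  gen_span : Submodule.span k (Set.range gen) = deg 1

variable {k R : Type} [Field k] [CommRing R] [Algebra k R]

/-- The Koszul differential on the Koszul complex (on the degree-one generators of `R`)
with coefficients in `R`; a function `Finset (Fin r) → R` records the coordinates of an
element of an exterior power component with respect to the basis `e_s`. -/
noncomputable def kosD (G : StdGraded k R) (f : Finset (Fin G.ngens) → R) :
    Finset (Fin G.ngens) → R := fun t =>
  ∑ j ∈ tᶜ, (-1 : R) ^ ((t.filter fun l => l < j).card) * G.gen j * f (insert j t)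

/-- `TorNonzero G A B i j` : the internal degree `j` part of the `i`-th homology of the
Koszul complex of the degree-one generators with coefficients in the graded module `A/B`
is nonzero; equivalently, the graded Betti number `β_{i,j}(A/B)` over a polynomial ring
mapping onto `R` is nonzero. -/
def TorNonzero (G : StdGraded k R) (A B : Ideal R) (i : ℕ) (j : ℤ) : Prop :=
  ∃ f : Finset (Fin G.ngens) → R,
    (∀ s, if s.card = i then f s ∈ A ∧ f s ∈ G.deg (j - (i : ℤ)) else f s = 0) ∧
    (∀ t, kosD G f t ∈ B) ∧
    ¬ ∃ g : Finset (Fin G.ngens) → R,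
        (∀ s, if s.card = i + 1 then g s ∈ A ∧ g s ∈ G.deg (j - (i : ℤ) - 1) else g s = 0) ∧
        (∀ s, f s - kosD G g s ∈ B)

/-- The Castelnuovo–Mumford regularity `reg (A/B) = max { a(H_m^i(A/B)) + i : i ≥ 0 }` of
the graded `R`-module `A/B`, via the graded Betti number characterization
`reg = max { j - i : β_{i,j} ≠ 0 }`. -/
noncomputable def reg (G : StdGraded k R) (A B : Ideal R) : ℤ :=
  sSup {e : ℤ | ∃ (i : ℕ) (j : ℤ), e = j - (i : ℤ) ∧ TorNonzero G A B i j}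

/-- The partial regularity `reg_t (A/B) = max { a(H_m^i(A/B)) + i : 0 ≤ i ≤ t }`, via
Trung's characterization `reg_t M = max { j - i : β_{i,j}(M) ≠ 0, i ≥ r - t }`. -/
noncomputable def preg (G : StdGraded k R) (t : ℕ) (A B : Ideal R) : ℤ :=
  sSup {e : ℤ | ∃ (i : ℕ) (j : ℤ), G.ngens - t ≤ i ∧ e = j - (i : ℤ) ∧ TorNonzero G A B i j}

/-- `I` is a homogeneous (graded) ideal. -/
def IsHomogeneousIdeal (G : StdGraded k R) (I : Ideal R) : Prop :=
  ∃ T : Set R, (∀ s ∈ T, ∃ j : ℤ, s ∈ G.deg j) ∧ I = Ideal.span T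

/-- `I` is generated by forms of the single degree `d` (equigenerated). -/
def GeneratedInDegree (G : StdGraded k R) (d : ℕ) (I : Ideal R) : Prop :=
  ∃ T : Set R, T ⊆ (G.deg (d : ℤ) : Set R) ∧ I = Ideal.span T

/-- The irrelevant maximal graded ideal `m = ⊕_{i > 0} R_i` of the standard graded
algebra `R` (generated by the degree-one part). -/
def irrel (G : StdGraded k R) : Ideal R := Ideal.span (G.deg 1 : Set R)

/-- The saturation `Ĩ = ∪_t (I : m^t)` of an ideal `I`. -/
noncomputable def satIdeal (G : StdGraded k R) (I : Ideal R) : Ideal R :=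
  ⨆ t : ℕ, Submodule.colon I (((irrel G) ^ t : Ideal R) : Set R)

open Classical in
/-- The supremum in `WithBot ℤ` of a set of integers: `⊥` (i.e. `-∞`) if the set is
empty.  (Junk value if the set is unbounded above.) -/
noncomputable def zsupBot (s : Set ℤ) : WithBot ℤ :=
  if s.Nonempty then ((sSup s : ℤ) : WithBot ℤ) else ⊥

/-- The saturation degree `sdeg I = a(Ĩ/I) + 1 = a(H_m^0(R/I)) + 1`: the least degree
from which `Ĩ` and `I` agree, `⊥` (i.e. `-∞`) if `Ĩ = I`. -/
noncomputable def sdegB (G : StdGraded k R) (I : Ideal R) : WithBot ℤ :=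
  zsupBot {a : ℤ | ∃ j : ℤ, a = j + 1 ∧ ∃ y : R, y ∈ G.deg j ∧ y ∈ satIdeal G I ∧ y ∉ I}

/-!
Write a nonzero product `w` of `n` degree-`d` generators of `I` as `w = ∑ xₗ vₗ`, where the
`xₗ` are the degree-one generators of `R` and `vₗ ∈ Iⁿ⁻¹` has degree `dn - 1`. Then `∑ vₗ eₗ`
is a Koszul `1`-cycle of `Iⁿ⁻¹/Iⁿ` of internal degree `dn`, and it is not a boundary: modulo
`Iⁿ` a boundary is `∑ (∂g)_{l} eₗ`, and `∑ xₗ (∂g)_{l} = (∂²g)_∅ = 0`, so `w` would be a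
combination of elements of `Iⁿ` with coefficients of positive degree; but `Iⁿ` lives in degrees
`≥ dn`, so the degree-`dn` part `w` of that combination vanishes. Hence `β_{1,dn}(Iⁿ⁻¹/Iⁿ) ≠ 0`.

For `reg`, a supremum in `ℤ`, to see this Betti number, the Koszul homology must live in
finitely many degrees: it is a finitely generated module over the noetherian ring `R`, killed by
the `xₗ` (Cartan homotopy), hence finite-dimensional over `k`, and nonzero homogeneous classes of
distinct degrees are linearly independent.
-/

open Pointwise DirectSum

namespace StdGraded

variable (G : StdGraded k R)

section Grading

theorem deg_natCast (n : ℕ) : G.deg n = G.deg 1 ^ n := by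
  induction n with
  | zero => simpa using G.deg_zero
  | succ n ih => rw [Nat.cast_succ, G.standard, ih, pow_succ']

theorem eq_zero_of_mem_deg_neg {e : ℤ} {x : R} (hx : x ∈ G.deg e) (he : e < 0) : x = 0 := by
  rwa [G.bot_of_neg e he, Submodule.mem_bot] at hx

theorem mul_mem_deg {a b : ℤ} {x y : R} (hx : x ∈ G.deg a) (hy : y ∈ G.deg b) :
    x * y ∈ G.deg (a + b) := by
  rcases lt_or_ge a 0 with ha | ha
  · simp [G.eq_zero_of_mem_deg_neg hx ha]
  rcases lt_or_ge b 0 with hb | hb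
  · simp [G.eq_zero_of_mem_deg_neg hy hb]
  lift a to ℕ using ha
  lift b to ℕ using hb
  rw [G.deg_natCast] at hx hy
  rw [← Nat.cast_add, G.deg_natCast, pow_add]
  exact Submodule.mul_mem_mul hx hy

noncomputable instance : GradedAlgebra G.deg where
  __ := G.internal.chooseDecomposition
  one_mem := by rw [G.deg_zero]; exact Submodule.one_le.mp le_rfl
  mul_mem _ _ _ _ := G.mul_mem_deg

theorem deg_pow_natCast (d n : ℕ) : G.deg d ^ n = G.deg (d * n : ℕ) := by
  rw [G.deg_natCast, G.deg_natCast, pow_mul]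

theorem set_pow_subset_deg {T : Set R} {d : ℕ} (hT : T ⊆ G.deg d) (n : ℕ) :
    T ^ n ⊆ G.deg (d * n) := by
  rw [← Nat.cast_mul, ← G.deg_pow_natCast]
  exact (Set.pow_subset_pow_left hT).trans fun _ hx => Submodule.pow_subset_pow _ hx

theorem isHomogeneous_span_pow {T : Set R} {d : ℕ} (hT : T ⊆ G.deg d) (n : ℕ) :
    (Ideal.span T ^ n).IsHomogeneous G.deg := by
  rw [Ideal.span, Submodule.span_pow]
  exact Ideal.homogeneous_span _ _ fun x hx => ⟨_, G.set_pow_subset_deg hT n hx⟩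

noncomputable abbrev proj (m : ℤ) : R →ₗ[k] R := GradedAlgebra.proj G.deg m

theorem proj_of_mem {m : ℤ} {x : R} (hx : x ∈ G.deg m) : G.proj m x = x :=
  decompose_of_mem_same G.deg hx

theorem proj_of_mem_ne {j m : ℤ} {x : R} (hx : x ∈ G.deg j) (h : j ≠ m) : G.proj m x = 0 :=
  decompose_of_mem_ne G.deg hx h

theorem proj_mem (m : ℤ) (x : R) : G.proj m x ∈ G.deg m :=
  SetLike.coe_mem _

theorem proj_mul_of_mem {e : ℤ} {a : R} (ha : a ∈ G.deg e) (m : ℤ) (x : R) :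
    G.proj m (a * x) = a * G.proj (m - e) x := by
  have := coe_decompose_mul_add_of_left_mem G.deg (j := m - e) (b := x) ha
  rwa [add_sub_cancel] at this

theorem proj_eq_zero_of_mem_span {S : Set R} {c : ℤ} (hS : ∀ s ∈ S, ∃ j, c ≤ j ∧ s ∈ G.deg j)
    {x : R} (hx : x ∈ Ideal.span S) {m : ℤ} (hm : m < c) : G.proj m x = 0 := by
  classical
  induction hx using Submodule.span_induction generalizing m with
  | mem y hy =>
    obtain ⟨j, hj, hy⟩ := hS y hy
    exact G.proj_of_mem_ne hy (by omega)
  | zero => exact map_zero _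
  | add y z _ _ hy hz => rw [map_add, hy hm, hz hm, add_zero]
  | smul r y _ hy =>
    rw [smul_eq_mul, ← sum_support_decompose G.deg r, Finset.sum_mul, map_sum]
    refine Finset.sum_eq_zero fun e _ => ?_
    rw [G.proj_mul_of_mem (SetLike.coe_mem _)]
    rcases lt_or_ge e 0 with he | he
    · rw [G.eq_zero_of_mem_deg_neg (SetLike.coe_mem _) he, zero_mul]
    · rw [hy (by omega), mul_zero]

theorem exists_eq_sum_gen_mul (p : ℕ) {x : R} (hx : x ∈ G.deg (p + 1)) :
    ∃ u : Fin G.ngens → R, (∀ l, u l ∈ G.deg p) ∧ x = ∑ l, G.gen l * u l := by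
  rw [G.standard] at hx
  induction hx using Submodule.mul_induction_on' with
  | mem_mul_mem a ha b hb =>
    rw [← G.gen_span, Submodule.mem_span_range_iff_exists_fun] at ha
    obtain ⟨c, rfl⟩ := ha
    exact ⟨fun l => c l • b, fun l => (G.deg p).smul_mem _ hb,
      by simp only [Finset.sum_mul, smul_mul_assoc, mul_smul_comm]⟩
  | add x _ y _ hx hy =>
    obtain ⟨u, hu, rfl⟩ := hx
    obtain ⟨v, hv, rfl⟩ := hy
    exact ⟨u + v, fun l => add_mem (hu l) (hv l), by
      simp only [Pi.add_apply, mul_add, Finset.sum_add_distrib]⟩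

theorem deg_le_adjoin_gen (j : ℤ) :
    G.deg j ≤ Subalgebra.toSubmodule (Algebra.adjoin k (Set.range G.gen)) := by
  rcases lt_or_ge j 0 with hj | hj
  · rw [G.bot_of_neg j hj]
    exact bot_le
  lift j to ℕ using hj
  induction j with
  | zero => simp [G.deg_zero]
  | succ n ih =>
    rw [Nat.cast_succ, G.standard]
    refine (mul_le_mul' ?_ ih).trans_eq (Subalgebra.isIdempotentElem_toSubmodule _)
    rw [← G.gen_span, Submodule.span_le]
    exact Algebra.subset_adjoin

theorem adjoin_gen_eq_top : Algebra.adjoin k (Set.range G.gen) = ⊤ := by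
  rw [← Algebra.toSubmodule_eq_top, eq_top_iff, ← G.internal.submodule_iSup_eq_top]
  exact iSup_le G.deg_le_adjoin_gen

include G in
theorem isNoetherianRing : IsNoetherianRing R := by
  classical
  have : Algebra.FiniteType k R := ⟨⟨Finset.univ.image G.gen, by simpa using G.adjoin_gen_eq_top⟩⟩
  exact Algebra.FiniteType.isNoetherianRing k R

theorem exists_sub_algebraMap_mem_span_gen (r : R) :
    ∃ c : k, r - algebraMap k R c ∈ Ideal.span (Set.range G.gen) := by
  have hr : r ∈ Algebra.adjoin k (Set.range G.gen) := G.adjoin_gen_eq_top ▸ trivial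
  induction hr using Algebra.adjoin_induction with
  | mem x hx => exact ⟨0, by simpa using Ideal.subset_span hx⟩
  | algebraMap c => exact ⟨c, by simp⟩
  | add x y _ _ hx hy =>
    obtain ⟨a, ha⟩ := hx
    obtain ⟨b, hb⟩ := hy
    exact ⟨a + b, by rw [map_add, add_sub_add_comm]; exact add_mem ha hb⟩
  | mul x y _ _ hx hy =>
    obtain ⟨a, ha⟩ := hx
    obtain ⟨b, hb⟩ := hy
    refine ⟨a * b, ?_⟩
    have : x * y - algebraMap k R (a * b) =
        (x - algebraMap k R a) * y + algebraMap k R a * (y - algebraMap k R b) := by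
      rw [map_mul]; ring
    rw [this]
    exact add_mem (Ideal.mul_mem_right _ _ ha) (Ideal.mul_mem_left _ _ hb)

theorem finite_of_gen_smul_eq_zero {M : Type*} [AddCommGroup M] [Module k M] [Module R M]
    [IsScalarTower k R M] [Module.Finite R M] (hM : ∀ l (x : M), G.gen l • x = 0) :
    Module.Finite k M := by
  have hmM : ∀ z ∈ Ideal.span (Set.range G.gen), ∀ x : M, z • x = 0 := by
    intro z hz x
    induction hz using Submodule.span_induction with
    | mem y hy => obtain ⟨l, rfl⟩ := hy; exact hM l x
    | zero => exact zero_smul _ _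
    | add a b _ _ ha hb => rw [add_smul, ha, hb, add_zero]
    | smul r a _ ha => rw [smul_eq_mul, mul_smul, ha, smul_zero]
  obtain ⟨c, hc⟩ := Module.Finite.fg_top (R := R) (M := M)
  refine ⟨⟨c, eq_top_iff.mpr ?_⟩⟩
  rintro x -
  have hx : x ∈ Submodule.span R (c : Set M) := hc ▸ trivial
  induction hx using Submodule.span_induction with
  | mem y hy => exact Submodule.subset_span hy
  | zero => exact zero_mem _
  | add a b _ _ ha hb => exact add_mem ha hb
  | smul r y _ hy =>
    obtain ⟨a, ha⟩ := G.exists_sub_algebraMap_mem_span_gen r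
    rw [← sub_add_cancel r (algebraMap k R a), add_smul, hmM _ ha, zero_add, algebraMap_smul]
    exact Submodule.smul_mem _ a hy

end Grading

section Koszul

theorem kosD_apply (f : Finset (Fin G.ngens) → R) (t : Finset (Fin G.ngens)) :
    kosD G f t =
      ∑ j ∈ tᶜ, (-1 : R) ^ ((t.filter fun l => l < j).card) * G.gen j * f (insert j t) := rfl

noncomputable def koszulDiff :
    (Finset (Fin G.ngens) → R) →ₗ[R] (Finset (Fin G.ngens) → R) where
  toFun := kosD G
  map_add' f g := by
    ext t
    simp only [kosD_apply, Pi.add_apply, mul_add, Finset.sum_add_distrib]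
  map_smul' r f := by
    ext t
    simp only [kosD_apply, Pi.smul_apply, smul_eq_mul, Finset.mul_sum, RingHom.id_apply]
    exact Finset.sum_congr rfl fun _ _ => by ring

theorem koszulDiff_apply (f : Finset (Fin G.ngens) → R) : G.koszulDiff f = kosD G f := rfl

theorem kosD_empty (f : Finset (Fin G.ngens) → R) : kosD G f ∅ = ∑ l, G.gen l * f {l} := by
  simp [kosD_apply]

variable {G}

theorem card_filter_lt_insert {t : Finset (Fin G.ngens)} {j : Fin G.ngens} (hj : j ∉ t)
    (m : Fin G.ngens) :
    ((insert j t).filter fun l => l < m).card =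
      (t.filter fun l => l < m).card + if j < m then 1 else 0 := by
  rw [Finset.filter_insert]
  split_ifs with h
  · exact Finset.card_insert_of_notMem fun hmem => hj (Finset.mem_of_mem_filter j hmem)
  · rfl

theorem card_filter_lt_insert_self (t : Finset (Fin G.ngens)) (j : Fin G.ngens) :
    ((insert j t).filter fun l => l < j).card = (t.filter fun l => l < j).card := by
  rw [Finset.filter_insert, if_neg (lt_irrefl j)]

theorem neg_one_pow_mul_self (n : ℕ) : (-1 : R) ^ n * (-1 : R) ^ n = 1 := by
  rw [← mul_pow, neg_one_mul, neg_neg, one_pow]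

theorem neg_one_pow_card_filter_insert_swap {t : Finset (Fin G.ngens)} {j m : Fin G.ngens}
    (hj : j ∉ t) (hm : m ∉ t) (hne : j ≠ m) :
    (-1 : R) ^ (t.filter fun l => l < j).card *
        (-1 : R) ^ ((insert j t).filter fun l => l < m).card =
      -((-1 : R) ^ (t.filter fun l => l < m).card *
        (-1 : R) ^ ((insert m t).filter fun l => l < j).card) := by
  rw [card_filter_lt_insert hj, card_filter_lt_insert hm]
  rcases hne.lt_or_gt with h | h
  · simp only [h, if_true, not_lt_of_gt h, if_false, pow_add]
    ring
  · simp only [h, if_true, not_lt_of_gt h, if_false, pow_add]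
    ring

variable (G)

theorem kosD_kosD (f : Finset (Fin G.ngens) → R) : kosD G (kosD G f) = 0 := by
  ext t
  let F : Fin G.ngens × Fin G.ngens → R := fun p =>
    if p.1 = p.2 then 0 else
      ((-1 : R) ^ (t.filter fun l => l < p.1).card *
        (-1 : R) ^ ((insert p.1 t).filter fun l => l < p.2).card) *
        (G.gen p.1 * G.gen p.2 * f (insert p.2 (insert p.1 t)))
  have hrow : ∀ j ∈ tᶜ, (-1 : R) ^ (t.filter fun l => l < j).card * G.gen j *
      kosD G f (insert j t) = ∑ m ∈ tᶜ, F (j, m) := by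
    intro j hj
    rw [kosD_apply, Finset.mul_sum, Finset.compl_insert,
      ← Finset.sum_erase tᶜ (f := fun m => F (j, m)) (if_pos rfl)]
    refine Finset.sum_congr rfl fun m hm => ?_
    simp only [F, if_neg (Finset.ne_of_mem_erase hm).symm]
    ring
  rw [kosD_apply, Finset.sum_congr rfl hrow, ← Finset.sum_product', Pi.zero_apply]
  refine Finset.sum_involution (fun p _ => p.swap) (fun p hp => ?_) (fun p _ hp h => ?_)
    (fun p hp => Finset.mem_product.mpr (Finset.mem_product.mp hp).symm) (fun _ _ => rfl)
  · obtain ⟨hj, hm⟩ := Finset.mem_product.mp hp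
    rcases eq_or_ne p.1 p.2 with he | hne
    · simp [F, he]
    simp only [F, Prod.fst_swap, Prod.snd_swap, if_neg hne, if_neg hne.symm,
      Finset.insert_comm p.2 p.1,
      neg_one_pow_card_filter_insert_swap (Finset.mem_compl.mp hj) (Finset.mem_compl.mp hm) hne]
    ring
  · exact hp (if_pos (congrArg Prod.fst h).symm)

/-- Exterior multiplication by the basis vector `e_l`. -/
noncomputable def extMul (l : Fin G.ngens) (f : Finset (Fin G.ngens) → R) :
    Finset (Fin G.ngens) → R := fun s =>
  if l ∈ s then (-1 : R) ^ (s.filter fun i => i < l).card * f (s.erase l) else 0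

theorem extMul_of_notMem (l : Fin G.ngens) (f : Finset (Fin G.ngens) → R)
    {s : Finset (Fin G.ngens)} (hl : l ∉ s) : extMul G l f s = 0 :=
  if_neg hl

theorem extMul_insert (l : Fin G.ngens) (f : Finset (Fin G.ngens) → R)
    {t : Finset (Fin G.ngens)} (hl : l ∉ t) :
    extMul G l f (insert l t) = (-1 : R) ^ (t.filter fun i => i < l).card * f t := by
  simp only [extMul, Finset.mem_insert_self, if_true, Finset.erase_insert hl,
    card_filter_lt_insert_self]

theorem kosD_extMul_of_notMem (l : Fin G.ngens) (f : Finset (Fin G.ngens) → R)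
    {s : Finset (Fin G.ngens)} (hl : l ∉ s) :
    kosD G (extMul G l f) s = G.gen l * f s := by
  rw [kosD_apply, Finset.sum_eq_single_of_mem l (Finset.mem_compl.mpr hl)]
  · rw [extMul_insert G l f hl]
    linear_combination (G.gen l * f s) * neg_one_pow_mul_self (R := R)
      (s.filter fun i => i < l).card
  · intro j _ hjl
    rw [extMul_of_notMem G l f (by simp [hl, Ne.symm hjl]), mul_zero]

theorem kosD_extMul_add_extMul_kosD_insert (l : Fin G.ngens) (f : Finset (Fin G.ngens) → R)
    {t : Finset (Fin G.ngens)} (hl : l ∉ t) :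
    kosD G (extMul G l f) (insert l t) + extMul G l (kosD G f) (insert l t) =
      G.gen l * f (insert l t) := by
  have hcompl : tᶜ = insert l (insert l t)ᶜ := by simp [Finset.compl_insert, hl]
  have hl_compl : l ∉ (insert l t)ᶜ := by simp
  rw [extMul_insert G l _ hl, kosD_apply, kosD_apply, hcompl, Finset.sum_insert hl_compl,
    mul_add, Finset.mul_sum, add_left_comm, ← Finset.sum_add_distrib, Finset.sum_eq_zero, add_zero]
  · linear_combination (G.gen l * f (insert l t)) * neg_one_pow_mul_self (R := R)
      (t.filter fun i => i < l).card
  intro j hj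
  have hjt : j ∉ insert l t := Finset.mem_compl.mp hj
  have hjl : j ≠ l := fun h => hjt (h ▸ Finset.mem_insert_self l t)
  rw [Finset.insert_comm, extMul_insert G l f (by simp [Ne.symm hjl, hl]),
    card_filter_lt_insert hl, card_filter_lt_insert (fun h => hjt (Finset.mem_insert_of_mem h))]
  rcases hjl.lt_or_gt with h | h
  · simp only [h, if_true, not_lt_of_gt h, if_false, pow_add]
    ring
  · simp only [h, if_true, not_lt_of_gt h, if_false, pow_add]
    ring

theorem kosD_extMul_add_extMul_kosD (l : Fin G.ngens) (f : Finset (Fin G.ngens) → R)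
    (s : Finset (Fin G.ngens)) :
    kosD G (extMul G l f) s + extMul G l (kosD G f) s = G.gen l * f s := by
  by_cases hl : l ∈ s
  · rw [← Finset.insert_erase hl]
    exact kosD_extMul_add_extMul_kosD_insert G l f (Finset.notMem_erase l s)
  · rw [extMul_of_notMem G l _ hl, add_zero, kosD_extMul_of_notMem G l f hl]

theorem proj_kosD (m : ℤ) (g : Finset (Fin G.ngens) → R) (s : Finset (Fin G.ngens)) :
    G.proj m (kosD G g s) = kosD G (fun u => G.proj (m - 1) (g u)) s := by
  rw [kosD_apply, kosD_apply, map_sum]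
  refine Finset.sum_congr rfl fun j _ => G.proj_mul_of_mem ?_ m _
  rcases neg_one_pow_eq_or R (s.filter fun l => l < j).card with h | h <;> rw [h]
  · simpa using G.gen_mem j
  · simpa using neg_mem (G.gen_mem j)

end Koszul

section Homology

variable (A B : Ideal R) (i : ℕ)

def chains : Submodule R (Finset (Fin G.ngens) → R) :=
  Submodule.pi Set.univ fun s => if s.card = i then A else ⊥

noncomputable def cycles : Submodule R (Finset (Fin G.ngens) → R) :=
  G.chains A i ⊓ (Submodule.pi Set.univ fun _ => B).comap G.koszulDiff

noncomputable def boundaries : Submodule R (Finset (Fin G.ngens) → R) :=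
  G.chains A i ⊓ ((G.chains A (i + 1)).map G.koszulDiff ⊔ Submodule.pi Set.univ fun _ => B)

/-- The Koszul homology `Hᵢ(x; A/B)`: chains of `K(x; A/B)` are lifted to `A`, and the cycle
and boundary conditions are imposed modulo `B`. -/
abbrev homology : Type := G.cycles A B i ⧸ (G.boundaries A B i).comap (G.cycles A B i).subtype

variable {G A B i}

theorem mem_chains {f : Finset (Fin G.ngens) → R} :
    f ∈ G.chains A i ↔ ∀ s, if s.card = i then f s ∈ A else f s = 0 := by
  simp only [chains, Submodule.mem_pi, Set.mem_univ, true_implies]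
  exact forall_congr' fun s => by split_ifs <;> simp

theorem mem_cycles {f : Finset (Fin G.ngens) → R} :
    f ∈ G.cycles A B i ↔ f ∈ G.chains A i ∧ ∀ t, kosD G f t ∈ B := by
  simp [cycles, Submodule.mem_pi, koszulDiff_apply]

theorem mem_boundaries {f : Finset (Fin G.ngens) → R} :
    f ∈ G.boundaries A B i ↔
      f ∈ G.chains A i ∧ ∃ g ∈ G.chains A (i + 1), ∀ s, f s - kosD G g s ∈ B := by
  simp only [boundaries, Submodule.mem_inf, Submodule.mem_sup, Submodule.mem_map,
    Submodule.mem_pi, Set.mem_univ, true_implies, koszulDiff_apply]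
  refine and_congr_right fun _ => ⟨?_, ?_⟩
  · rintro ⟨_, ⟨g, hg, rfl⟩, b, hb, rfl⟩
    exact ⟨g, hg, fun s => by simpa using hb s⟩
  · rintro ⟨g, hg, hb⟩
    exact ⟨_, ⟨g, hg, rfl⟩, f - kosD G g, hb, add_sub_cancel _ _⟩

theorem extMul_mem {l : Fin G.ngens} {f : Finset (Fin G.ngens) → R} (hf : ∀ s, f s ∈ A)
    (s : Finset (Fin G.ngens)) : extMul G l f s ∈ A := by
  by_cases hl : l ∈ s
  · simp only [extMul, if_pos hl]
    exact Ideal.mul_mem_left _ _ (hf _)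
  · rw [extMul_of_notMem G l f hl]
    exact zero_mem _

theorem extMul_mem_chains (l : Fin G.ngens) {f : Finset (Fin G.ngens) → R}
    (hf : f ∈ G.chains A i) : extMul G l f ∈ G.chains A (i + 1) := by
  rw [mem_chains] at hf ⊢
  intro s
  by_cases hl : l ∈ s
  · have hfs := hf (s.erase l)
    have hs : 0 < s.card := Finset.card_pos.mpr ⟨l, hl⟩
    simp only [extMul, if_pos hl, Finset.card_erase_of_mem hl] at hfs ⊢
    split_ifs at hfs ⊢
    · exact Ideal.mul_mem_left _ _ hfs
    · omega
    · omega
    · rw [hfs, mul_zero]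
  · simp [extMul_of_notMem G l f hl]

theorem gen_smul_mem_boundaries (l : Fin G.ngens) {f : Finset (Fin G.ngens) → R}
    (hf : f ∈ G.cycles A B i) : G.gen l • f ∈ G.boundaries A B i := by
  obtain ⟨hfA, hfB⟩ := mem_cycles.mp hf
  refine mem_boundaries.mpr
    ⟨Submodule.smul_mem _ _ hfA, extMul G l f, extMul_mem_chains l hfA, fun s => ?_⟩
  rw [Pi.smul_apply, smul_eq_mul, ← kosD_extMul_add_extMul_kosD, add_sub_cancel_left]
  exact extMul_mem hfB s

theorem torNonzero_iff {j : ℤ} :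
    TorNonzero G A B i j ↔ ∃ f ∈ G.cycles A B i, (∀ s, f s ∈ G.deg (j - i)) ∧
      ¬ ∃ g ∈ G.chains A (i + 1), (∀ s, g s ∈ G.deg (j - i - 1)) ∧
        ∀ s, f s - kosD G g s ∈ B := by
  have key : ∀ (i : ℕ) (e : ℤ) (f : Finset (Fin G.ngens) → R),
      (∀ s, if s.card = i then f s ∈ A ∧ f s ∈ G.deg e else f s = 0) ↔
        f ∈ G.chains A i ∧ ∀ s, f s ∈ G.deg e := by
    intro i e f
    rw [mem_chains, ← forall_and]
    refine forall_congr' fun s => ?_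
    split_ifs with h
    · exact Iff.rfl
    · exact ⟨fun h0 => ⟨h0, h0 ▸ zero_mem _⟩, And.left⟩
  simp only [TorNonzero, key, mem_cycles, and_assoc]
  exact exists_congr fun _ => ⟨fun ⟨h1, h2, h3, h4⟩ => ⟨h1, h3, h2, h4⟩,
    fun ⟨h1, h2, h3, h4⟩ => ⟨h1, h3, h2, h4⟩⟩

theorem proj_mem_chains (hA : A.IsHomogeneous G.deg) (e : ℤ) {g : Finset (Fin G.ngens) → R}
    (hg : g ∈ G.chains A i) : (fun s => G.proj e (g s)) ∈ G.chains A i := by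
  rw [mem_chains] at hg ⊢
  intro s
  have := hg s
  split_ifs at this ⊢
  · exact hA e this
  · rw [this, map_zero]

theorem exists_homogeneous_boundary (hA : A.IsHomogeneous G.deg) (hB : B.IsHomogeneous G.deg)
    {f : Finset (Fin G.ngens) → R} (hf : f ∈ G.boundaries A B i) (e : ℤ) :
    ∃ g ∈ G.chains A (i + 1), (∀ s, g s ∈ G.deg (e - 1)) ∧
      ∀ s, G.proj e (f s) - kosD G g s ∈ B := by
  obtain ⟨-, g, hg, hb⟩ := mem_boundaries.mp hf
  refine ⟨_, proj_mem_chains hA (e - 1) hg, fun s => G.proj_mem _ _, fun s => ?_⟩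
  rw [← proj_kosD, ← map_sub]
  exact hB e (hb s)

variable (G A B i)

include G in
theorem finite_homology : Module.Finite k (G.homology A B i) := by
  have := G.isNoetherianRing
  have : Module.Finite R (G.cycles A B i) :=
    Module.Finite.iff_fg.mpr (IsNoetherian.noetherian _)
  refine G.finite_of_gen_smul_eq_zero fun l x => ?_
  obtain ⟨x, rfl⟩ := Submodule.Quotient.mk_surjective _ x
  rw [← Submodule.Quotient.mk_smul, Submodule.Quotient.mk_eq_zero]
  exact gen_smul_mem_boundaries l x.2

variable {G A B i}

theorem linearIndependent_homology_mk (hA : A.IsHomogeneous G.deg)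
    (hB : B.IsHomogeneous G.deg) {ι : Type*} {e : ι → ℤ} (he : Function.Injective e)
    (F : ι → G.cycles A B i) (hdeg : ∀ a s, (F a : Finset (Fin G.ngens) → R) s ∈ G.deg (e a))
    (hF : ∀ a, ¬ ∃ g ∈ G.chains A (i + 1), (∀ s, g s ∈ G.deg (e a - 1)) ∧
      ∀ s, (F a : Finset (Fin G.ngens) → R) s - kosD G g s ∈ B) :
    LinearIndependent k fun a => (Submodule.Quotient.mk (F a) : G.homology A B i) := by
  classical
  rw [linearIndependent_iff']
  intro t c hc a ha
  by_contra hca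
  set f : Finset (Fin G.ngens) → R := ∑ b ∈ t, c b • (F b : Finset (Fin G.ngens) → R)
  have hf : f ∈ G.boundaries A B i := by
    have : ∑ b ∈ t, c b • F b ∈ (G.boundaries A B i).comap (G.cycles A B i).subtype := by
      rw [← Submodule.Quotient.mk_eq_zero, ← hc, ← Submodule.mkQ_apply, map_sum]
      simp only [Submodule.mkQ_apply, Submodule.Quotient.mk_smul]
    simpa [f] using this
  have hproj : ∀ s, G.proj (e a) (f s) = c a • (F a : Finset (Fin G.ngens) → R) s := by
    intro s
    rw [show f s = _ from Finset.sum_apply s t _, map_sum, Finset.sum_eq_single_of_mem a ha]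
    · rw [Pi.smul_apply, map_smul, G.proj_of_mem (hdeg a s)]
    · intro b _ hba
      rw [Pi.smul_apply, map_smul, G.proj_of_mem_ne (hdeg b s) (he.ne hba), smul_zero]
  obtain ⟨g, hg, hgdeg, hgB⟩ := exists_homogeneous_boundary hA hB hf (e a)
  refine hF a ⟨(c a)⁻¹ • g, Submodule.smul_of_tower_mem _ _ hg,
    fun s => Submodule.smul_mem _ _ (hgdeg s), fun s => ?_⟩
  have hscale : (F a : Finset (Fin G.ngens) → R) s - kosD G ((c a)⁻¹ • g) s =
      algebraMap k R (c a)⁻¹ * (G.proj (e a) (f s) - kosD G g s) := by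
    rw [← koszulDiff_apply, LinearMap.map_smul_of_tower, koszulDiff_apply, hproj,
      ← Algebra.smul_def, smul_sub, inv_smul_smul₀ hca, Pi.smul_apply]
  rw [hscale]
  exact Ideal.mul_mem_left _ _ (hgB s)

theorem finite_setOf_torNonzero (hA : A.IsHomogeneous G.deg) (hB : B.IsHomogeneous G.deg) :
    {j | TorNonzero G A B i j}.Finite := by
  choose F hF hdeg hnb using fun j : {j // TorNonzero G A B i j} => torNonzero_iff.mp j.2
  have := G.finite_homology A B i
  have hli := linearIndependent_homology_mk hA hB (e := fun j => j.1 - i)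
    (fun _ _ h => Subtype.ext (by simpa using h)) (fun j => ⟨F j, hF j⟩) hdeg hnb
  exact Set.finite_coe_iff.mp hli.finite

theorem le_ngens_of_torNonzero {j : ℤ} (h : TorNonzero G A B i j) : i ≤ G.ngens := by
  by_contra hi
  obtain ⟨f, hf, -, hnb⟩ := torNonzero_iff.mp h
  have hf0 : f = 0 := by
    ext s
    have hs := (mem_chains.mp (mem_cycles.mp hf).1) s
    rwa [if_neg (by have := s.card_le_univ; simp at this; omega)] at hs
  exact hnb ⟨0, zero_mem _, fun _ => zero_mem _, fun s => by simp [hf0, kosD_apply]⟩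

theorem bddAbove_setOf_torNonzero (hA : A.IsHomogeneous G.deg) (hB : B.IsHomogeneous G.deg) :
    BddAbove {e : ℤ | ∃ (i : ℕ) (j : ℤ), e = j - (i : ℤ) ∧ TorNonzero G A B i j} := by
  refine ((Set.finite_le_nat G.ngens).biUnion fun i _ =>
    (finite_setOf_torNonzero (i := i) hA hB).image (· - (i : ℤ))).bddAbove.mono ?_
  rintro e ⟨i, j, rfl, h⟩
  exact Set.mem_biUnion (le_ngens_of_torNonzero h) ⟨j, h, rfl⟩

theorem le_reg (hA : A.IsHomogeneous G.deg) (hB : B.IsHomogeneous G.deg) {j : ℤ}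
    (h : TorNonzero G A B i j) : j - i ≤ reg G A B :=
  le_csSup (bddAbove_setOf_torNonzero hA hB) ⟨i, j, rfl, h⟩

end Homology

section Witness

variable {G} {T : Set R} {d n : ℕ}

theorem exists_ne_zero_eq_sum_gen_mul (hd : 1 ≤ d) (hn : 1 ≤ n) (hT : T ⊆ G.deg d)
    (hpow : Ideal.span T ^ n ≠ ⊥) :
    ∃ w ∈ G.deg (d * n), w ∈ Ideal.span T ^ n ∧ w ≠ 0 ∧ ∃ v : Fin G.ngens → R,
      (∀ l, v l ∈ G.deg (d * n - 1) ∧ v l ∈ Ideal.span T ^ (n - 1)) ∧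
      w = ∑ l, G.gen l * v l := by
  rw [Ideal.span, Submodule.span_pow, Ne, Submodule.span_eq_bot] at hpow
  push Not at hpow
  obtain ⟨w, hw, hw0⟩ := hpow
  refine ⟨w, G.set_pow_subset_deg hT n hw, ?_, hw0, ?_⟩
  · rw [Ideal.span, Submodule.span_pow]
    exact Submodule.subset_span hw
  rw [← Nat.sub_add_cancel hn, pow_succ] at hw
  obtain ⟨q, hq, t, ht, rfl⟩ := hw
  obtain ⟨u, hu, htu⟩ := G.exists_eq_sum_gen_mul (d - 1) (x := t) (by
    rw [Nat.cast_sub hd, Nat.cast_one, sub_add_cancel]; exact hT ht)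
  refine ⟨fun l => u l * q, fun l => ⟨?_, ?_⟩, ?_⟩
  · have := G.mul_mem_deg (hu l) (G.set_pow_subset_deg hT (n - 1) hq)
    convert this using 2
    push_cast [Nat.cast_sub hd, Nat.cast_sub hn]
    ring
  · rw [Ideal.span, Submodule.span_pow]
    exact Ideal.mul_mem_left _ _ (Submodule.subset_span hq)
  · simp only [htu, Finset.mul_sum]
    exact Finset.sum_congr rfl fun l _ => by ring

theorem proj_sum_gen_mul_eq_zero (hT : T ⊆ G.deg d) {v : Fin G.ngens → R}
    {g : Finset (Fin G.ngens) → R} (hg : ∀ l, v l - kosD G g {l} ∈ Ideal.span T ^ n) :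
    G.proj (d * n) (∑ l, G.gen l * v l) = 0 := by
  have hsum : ∑ l, G.gen l * v l = ∑ l, G.gen l * (v l - kosD G g {l}) := by
    simp only [mul_sub, Finset.sum_sub_distrib, ← kosD_empty, kosD_kosD, Pi.zero_apply,
      sub_zero]
  rw [hsum, map_sum]
  refine Finset.sum_eq_zero fun l _ => ?_
  rw [G.proj_mul_of_mem (G.gen_mem l), G.proj_eq_zero_of_mem_span
    (fun x hx => ⟨_, le_rfl, G.set_pow_subset_deg hT n hx⟩)
    (by rw [Ideal.span, ← Submodule.span_pow]; exact hg l) (by omega), mul_zero]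

theorem torNonzero_one_pow_pred_pow (hd : 1 ≤ d) (hn : 1 ≤ n) (hT : T ⊆ G.deg d)
    (hpow : Ideal.span T ^ n ≠ ⊥) :
    TorNonzero G (Ideal.span T ^ (n - 1)) (Ideal.span T ^ n) 1 (d * n) := by
  classical
  obtain ⟨w, hw, hwI, hw0, v, hv, rfl⟩ := exists_ne_zero_eq_sum_gen_mul hd hn hT hpow
  let f : Finset (Fin G.ngens) → R := fun s => if s.card = 1 then ∑ l ∈ s, v l else 0
  have hf : ∀ l, f {l} = v l := fun l => by simp [f]
  have hf_mem : ∀ s, f s ∈ Ideal.span T ^ (n - 1) := fun s => by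
    by_cases hs : s.card = 1
    · simpa [f, hs] using Submodule.sum_mem _ fun l _ => (hv l).2
    · simp [f, hs]
  refine torNonzero_iff.mpr ⟨f, mem_cycles.mpr ⟨mem_chains.mpr fun s => ?_, fun t => ?_⟩,
    fun s => ?_, ?_⟩
  · split_ifs with hs
    · exact hf_mem s
    · simp [f, hs]
  · rcases t.eq_empty_or_nonempty with rfl | ht
    · simpa only [kosD_empty, hf] using hwI
    · refine Submodule.sum_mem _ fun j hj => ?_
      have : (insert j t).card ≠ 1 := by
        rw [Finset.card_insert_of_notMem (Finset.mem_compl.mp hj)]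
        have := ht.card_pos
        omega
      simp [f, this]
  · by_cases hs : s.card = 1
    · simpa [f, hs] using Submodule.sum_mem _ fun l _ => (hv l).1
    · simp [f, hs]
  · rintro ⟨g, -, -, hg⟩
    rw [← G.proj_of_mem hw, proj_sum_gen_mul_eq_zero hT fun l => by simpa [hf] using hg {l}]
      at hw0
    exact hw0 rfl

end Witness

end StdGraded

theorem stmt1_general (G : StdGraded k R) (I : Ideal R) (d : ℕ) (hd : 1 ≤ d)
    (hgen : GeneratedInDegree G d I)
    (hpow : ∀ n : ℕ, 1 ≤ n → I ^ n ≠ ⊥) :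
    ∀ n : ℕ, 1 ≤ n → (d : ℤ) * n - 1 ≤ reg G (I ^ (n - 1)) (I ^ n) := by
  intro n hn
  obtain ⟨T, hT, rfl⟩ := hgen
  simpa using StdGraded.le_reg (G.isHomogeneous_span_pow hT _) (G.isHomogeneous_span_pow hT _)
    (StdGraded.torNonzero_one_pow_pred_pow hd hn hT (hpow n hn))

/-- If `I` is generated by forms of a single degree `d` and `ht I > 0` (equivalently,
`I` is contained in no minimal prime of `R`), then `reg Iⁿ⁻¹/Iⁿ ≥ d·n - 1` for all
`n ≥ 1`. -/
theorem stmt1 (G : StdGraded k R) (I : Ideal R) (d : ℕ) (hd : 1 ≤ d)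
    (hgen : GeneratedInDegree G d I) (hproper : I ≠ ⊤)
    (hpow : ∀ n : ℕ, 1 ≤ n → I ^ n ≠ ⊥)
    (hht : ∀ p ∈ minimalPrimes R, ¬ I ≤ p) :
    ∀ n : ℕ, 1 ≤ n → (d : ℤ) * n - 1 ≤ reg G (I ^ (n - 1)) (I ^ n) :=
  stmt1_general G I d hd hgen hpow
end

section
/- Let {c_n}_{n≥0} be a weakly decreasing sequence of positive integers and d ≥ 1 an integer. Let m be the minimum integer such that c_n = c_m for all n > m. Let S = k[x,y] be a polynomial ring over a field k, Q = (x^{c_0}, x^{c_1} y^d, ..., x^{c_m} y^{dm}), R = S/Q and I = (y^d, Q)/Q. Then reg I^n/I^{n+1} = d(n+1) + c_n − 2 for all n ≥ 0. -/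
variable {k R : Type} [Field k] [CommRing R] [Algebra k R]

/-!
With regularity read off Koszul homology, `A/B` has regularity at most `N` once it vanishes
above degree `N` (every Koszul cycle of larger degree is then zero modulo `B`), and at least
`N` once it has a socle element `u` of degree `N`: `u · e_1 ∧ … ∧ e_r` is a cycle in top
homological degree that cannot be a boundary. For `M = Iⁿ/Iⁿ⁺¹`, the powers `Iᵗ` pull back
to the monomial ideals `(y^{dt}) + Q` of `k[x,y]`, and `x^{c_n - 1} y^{d(n+1) - 1}` is a socle
element of `M` in degree `d(n+1) + c_n - 2`, above which `M` vanishes.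
-/

section Regularity

theorem kosD_zero (G : StdGraded k R) : kosD G 0 = 0 := by
  ext t
  simp [kosD]

theorem TorNonzero.sub_le {G : StdGraded k R} {A B : Ideal R} {N : ℤ}
    (hvan : ∀ e, N < e → ∀ r ∈ G.deg e, r ∈ A → r ∈ B) {i : ℕ} {j : ℤ}
    (h : TorNonzero G A B i j) : j - i ≤ N := by
  obtain ⟨f, hf, -, hnot⟩ := h
  by_contra! hlt
  refine hnot ⟨0, fun s => ?_, fun s => ?_⟩
  · split_ifs <;> simp
  · rw [kosD_zero, Pi.zero_apply, sub_zero]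
    have hfs := hf s
    split_ifs at hfs
    · exact hvan _ hlt _ hfs.2 hfs.1
    · simp [hfs]

theorem torNonzero_ngens_of_socle {G : StdGraded k R} {A B : Ideal R} {u : R} {N : ℤ}
    (huA : u ∈ A) (huB : u ∉ B) (hu : u ∈ G.deg N) (hsoc : ∀ i, G.gen i * u ∈ B) :
    TorNonzero G A B G.ngens (N + G.ngens) := by
  classical
  have card_eq_ngens : ∀ s : Finset (Fin G.ngens), s.card = G.ngens ↔ s = Finset.univ := by
    intro s; rw [← Finset.card_eq_iff_eq_univ, Fintype.card_fin]
  refine ⟨fun s => if s = Finset.univ then u else 0, fun s => ?_, fun t => ?_, ?_⟩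
  · simp only [card_eq_ngens]
    split_ifs
    · exact ⟨huA, by simpa using hu⟩
    · rfl
  · refine Ideal.sum_mem _ fun j _ => ?_
    dsimp only
    split_ifs
    · rw [mul_assoc]; exact Ideal.mul_mem_left _ _ (hsoc j)
    · simp
  · rintro ⟨g, hg, hB⟩
    have hg0 : g = 0 := by
      ext s
      have hcard : s.card ≠ G.ngens + 1 := by
        have := Finset.card_le_univ s
        simp only [Fintype.card_fin] at this
        omega
      simpa [hcard] using hg s
    exact huB (by simpa [hg0, kosD_zero] using hB Finset.univ)

theorem reg_eq_of_socle {G : StdGraded k R} {A B : Ideal R} {u : R} {N : ℤ}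
    (huA : u ∈ A) (huB : u ∉ B) (hu : u ∈ G.deg N) (hsoc : ∀ i, G.gen i * u ∈ B)
    (hvan : ∀ e, N < e → ∀ r ∈ G.deg e, r ∈ A → r ∈ B) : reg G A B = N := by
  have hub : ∀ e ∈ {e : ℤ | ∃ (i : ℕ) (j : ℤ), e = j - i ∧ TorNonzero G A B i j}, e ≤ N := by
    rintro e ⟨i, j, rfl, h⟩
    exact h.sub_le hvan
  have hN : N ∈ {e : ℤ | ∃ (i : ℕ) (j : ℤ), e = j - i ∧ TorNonzero G A B i j} :=
    ⟨G.ngens, N + G.ngens, by ring, torNonzero_ngens_of_socle huA huB hu hsoc⟩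
  exact le_antisymm (csSup_le ⟨N, hN⟩ hub) (le_csSup ⟨N, hub⟩ hN)

end Regularity

open MvPolynomial

section QuotientGrading

variable {σ : Type} {Q : Ideal (MvPolynomial σ k)} {G : StdGraded k (MvPolynomial σ k ⧸ Q)}

theorem Ideal.Quotient.mk_mem_map_span_singleton_pow_iff {S : Type*} [CommRing S]
    {J : Ideal S} (x p : S) (t : ℕ) :
    Ideal.Quotient.mk J p ∈ Ideal.map (Ideal.Quotient.mk J) (Ideal.span {x}) ^ t ↔
      p ∈ Ideal.span {x ^ t} ⊔ J := by
  rw [← Ideal.map_pow, Ideal.span_singleton_pow, Ideal.mem_quotient_iff_mem_sup]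

theorem MvPolynomial.mul_mem_of_isHomogeneous_one {h p : MvPolynomial σ k}
    {J : Ideal (MvPolynomial σ k)} (hh : h.IsHomogeneous 1) (hX : ∀ i, X i * p ∈ J) :
    h * p ∈ J := by
  have hspan : Submodule.span k (Set.range (X : σ → MvPolynomial σ k)) ≤
      (J.colon {p}).restrictScalars k := by
    rw [Submodule.span_le]
    rintro _ ⟨i, rfl⟩
    exact Submodule.mem_colon_singleton.mpr (hX i)
  rw [← mem_homogeneousSubmodule, homogeneousSubmodule_one_eq_span_X] at hh
  exact Submodule.mem_colon_singleton.mp (hspan hh)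

variable (hdeg : ∀ j : ℤ, G.deg j = Submodule.map (Ideal.Quotient.mkₐ k Q).toLinearMap
      (if 0 ≤ j then homogeneousSubmodule σ k j.toNat else ⊥))
include hdeg

theorem exists_isHomogeneous_of_mem_deg {e : ℤ} (he : 0 ≤ e) {r : MvPolynomial σ k ⧸ Q}
    (hr : r ∈ G.deg e) : ∃ p : MvPolynomial σ k, p.IsHomogeneous e.toNat ∧
      Ideal.Quotient.mk Q p = r := by
  simpa [hdeg, he, Ideal.Quotient.mkₐ_eq_mk] using hr

theorem mk_mem_deg {p : MvPolynomial σ k} {E : ℕ} (hp : p.IsHomogeneous E) :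
    Ideal.Quotient.mk Q p ∈ G.deg E := by
  rw [hdeg, if_pos (Int.natCast_nonneg E)]
  exact ⟨p, by simpa using hp, rfl⟩

theorem gen_mul_mk_mem {J : Ideal (MvPolynomial σ k ⧸ Q)} {p : MvPolynomial σ k}
    (hX : ∀ i, X i * p ∈ J.comap (Ideal.Quotient.mk Q)) (i : Fin G.ngens) :
    G.gen i * Ideal.Quotient.mk Q p ∈ J := by
  obtain ⟨h, hh, hgen⟩ := exists_isHomogeneous_of_mem_deg hdeg zero_le_one (G.gen_mem i)
  rw [← hgen, ← map_mul]
  exact mul_mem_of_isHomogeneous_one hh hX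

end QuotientGrading

section Staircase

variable (c : ℕ → ℕ) (d m : ℕ)

theorem MvPolynomial.X_pow_mul_X_pow_eq_monomial (a b : ℕ) :
    (X 0 ^ a * X 1 ^ b : MvPolynomial (Fin 2) k) =
      monomial (Finsupp.single 0 a + Finsupp.single 1 b) 1 := by
  rw [X_pow_eq_monomial, X_pow_eq_monomial, monomial_mul, one_mul]

theorem Finsupp.single_zero_add_single_one_le_iff (a b : ℕ) (μ : Fin 2 →₀ ℕ) :
    Finsupp.single 0 a + Finsupp.single 1 b ≤ μ ↔ a ≤ μ 0 ∧ b ≤ μ 1 := by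
  simp [Finsupp.le_def, Fin.forall_fin_two, Finsupp.single_apply]

variable (k) in
noncomputable def stairIdeal (b : ℕ) : Ideal (MvPolynomial (Fin 2) k) :=
  Ideal.span {X 1 ^ b} ⊔ Ideal.span {q | ∃ i ≤ m, q = X 0 ^ c i * X 1 ^ (d * i)}

theorem stairIdeal_eq_span_monomial (b : ℕ) :
    stairIdeal k c d m b = Ideal.span ((monomial · (1 : k)) ''
      insert (Finsupp.single 1 b)
        {s | ∃ i ≤ m, s = Finsupp.single 0 (c i) + Finsupp.single 1 (d * i)}) := by
  rw [Set.image_insert_eq, Ideal.span_insert, stairIdeal, X_pow_eq_monomial]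
  congr
  ext q
  simp only [Set.mem_ofPred_eq, X_pow_mul_X_pow_eq_monomial]
  grind

theorem mem_stairIdeal_iff {b : ℕ} {p : MvPolynomial (Fin 2) k} :
    p ∈ stairIdeal k c d m b ↔
      ∀ μ ∈ p.support, b ≤ μ 1 ∨ ∃ i ≤ m, c i ≤ μ 0 ∧ d * i ≤ μ 1 := by
  rw [stairIdeal_eq_span_monomial, mem_ideal_span_monomial_image]
  refine forall₂_congr fun μ _ => ?_
  simp only [Set.mem_insert_iff, Set.mem_ofPred_eq, exists_eq_or_imp, Finsupp.single_le_iff]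
  grind [Finsupp.single_zero_add_single_one_le_iff]

theorem X_pow_mul_X_pow_mem_stairIdeal_iff {a b b' : ℕ} :
    X 0 ^ a * X 1 ^ b' ∈ stairIdeal k c d m b ↔
      b ≤ b' ∨ ∃ i ≤ m, c i ≤ a ∧ d * i ≤ b' := by
  classical
  rw [mem_stairIdeal_iff, X_pow_mul_X_pow_eq_monomial, support_monomial, if_neg one_ne_zero]
  simp

end Staircase

section Socle

variable {c : ℕ → ℕ} {d m : ℕ}

theorem exists_le_le_eq_of_eventually_const (hm : ∀ n, m < n → c n = c m) (n : ℕ) :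
    ∃ i ≤ m, i ≤ n ∧ c i = c n := by
  refine ⟨min n m, min_le_right _ _, min_le_left _ _, ?_⟩
  rcases le_or_gt n m with h | h
  · rw [min_eq_left h]
  · rw [min_eq_right h.le, hm n h]

theorem MvPolynomial.IsHomogeneous.apply_zero_add_apply_one {p : MvPolynomial (Fin 2) k}
    {E : ℕ} (hp : p.IsHomogeneous E) {μ : Fin 2 →₀ ℕ} (hμ : μ ∈ p.support) :
    μ 0 + μ 1 = E := by
  rw [← Fin.sum_univ_two (f := fun i => μ i), ← Finsupp.degree_eq_sum,
    Finsupp.degree_eq_weight_one]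
  exact hp (mem_support_iff.mp hμ)

/-- Past degree `d (n + 1) + c n - 2`, every monomial of `(y^{d n}) + Q` outside
`(y^{d (n + 1)}) + Q` is divisible by `x^{c n} y^{d n}`, hence by a generator of `Q`. -/
theorem mem_stairIdeal_succ_of_isHomogeneous (hm : ∀ n, m < n → c n = c m) {n E : ℕ}
    {p : MvPolynomial (Fin 2) k} (hp : p.IsHomogeneous E) (hE : d * (n + 1) + c n ≤ E + 1)
    (hpn : p ∈ stairIdeal k c d m (d * n)) : p ∈ stairIdeal k c d m (d * (n + 1)) := by
  rw [mem_stairIdeal_iff] at hpn ⊢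
  intro μ hμ
  have hdeg := hp.apply_zero_add_apply_one hμ
  obtain ⟨i, him, hin, hci⟩ := exists_le_le_eq_of_eventually_const hm n
  have hdi : d * i ≤ d * n := Nat.mul_le_mul_left d hin
  rcases hpn μ hμ with h | h
  · by_cases hy : d * (n + 1) ≤ μ 1
    · exact Or.inl hy
    · exact Or.inr ⟨i, him, by omega, by omega⟩
  · exact Or.inr h

variable (c d) in
noncomputable def socleMonomial (n : ℕ) : MvPolynomial (Fin 2) k :=
  X 0 ^ (c n - 1) * X 1 ^ (d * (n + 1) - 1)

theorem socleMonomial_isHomogeneous (n : ℕ) :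
    (socleMonomial (k := k) c d n).IsHomogeneous (c n - 1 + (d * (n + 1) - 1)) :=
  (isHomogeneous_X_pow _ _).mul (isHomogeneous_X_pow _ _)

theorem socleMonomial_mem_stairIdeal (hd : 1 ≤ d) (n : ℕ) :
    socleMonomial c d n ∈ stairIdeal k c d m (d * n) := by
  rw [socleMonomial, X_pow_mul_X_pow_mem_stairIdeal_iff]
  left
  have : d * (n + 1) = d * n + d := by ring
  omega

theorem socleMonomial_notMem_stairIdeal_succ (hpos : ∀ n, 1 ≤ c n)
    (hdec : ∀ n, c (n + 1) ≤ c n) (hd : 1 ≤ d) (n : ℕ) :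
    socleMonomial c d n ∉ stairIdeal k c d m (d * (n + 1)) := by
  rw [socleMonomial, X_pow_mul_X_pow_mem_stairIdeal_iff]
  have hdd : d * (n + 1) = d * n + d := by ring
  rintro (h | ⟨i, -, hci, hdi⟩)
  · omega
  · have hin : i ≤ n := by
      by_contra! hni
      have : d * (n + 1) ≤ d * i := Nat.mul_le_mul_left d hni
      omega
    have := antitone_nat_of_succ_le hdec hin
    have := hpos n
    omega

theorem X_mul_socleMonomial_mem_stairIdeal_succ (hpos : ∀ n, 1 ≤ c n) (hd : 1 ≤ d)
    (hm : ∀ n, m < n → c n = c m) (n : ℕ) :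
    ∀ j, X j * socleMonomial c d n ∈ stairIdeal k c d m (d * (n + 1)) := by
  have hcn := hpos n
  have hdd : d * (n + 1) = d * n + d := by ring
  rw [Fin.forall_fin_two]
  constructor
  · rw [socleMonomial, ← mul_assoc, ← pow_succ', X_pow_mul_X_pow_mem_stairIdeal_iff]
    obtain ⟨i, him, hin, hci⟩ := exists_le_le_eq_of_eventually_const hm n
    have : d * i ≤ d * n := Nat.mul_le_mul_left d hin
    exact Or.inr ⟨i, him, by omega, by omega⟩
  · rw [socleMonomial, mul_left_comm, ← pow_succ', X_pow_mul_X_pow_mem_stairIdeal_iff]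
    exact Or.inl (by omega)

end Socle

set_option synthInstance.maxHeartbeats 1000000 in
set_option maxHeartbeats 1000000 in
open MvPolynomial in
theorem stmt3_general (c : ℕ → ℕ) (hpos : ∀ n, 1 ≤ c n) (hdec : ∀ n, c (n + 1) ≤ c n)
    (d : ℕ) (hd : 1 ≤ d) (m : ℕ)
    (hm : ∀ n, m < n → c n = c m)
    (Q : Ideal (MvPolynomial (Fin 2) k))
    (hQ : Q = Ideal.span {q | ∃ i : ℕ, i ≤ m ∧ q = X 0 ^ c i * X 1 ^ (d * i)})
    (I : Ideal (MvPolynomial (Fin 2) k ⧸ Q))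
    (hI : I = Ideal.map (Ideal.Quotient.mk Q) (Ideal.span {X 1 ^ d}))
    (G : StdGraded k (MvPolynomial (Fin 2) k ⧸ Q))
    (hdeg : ∀ j : ℤ, G.deg j = Submodule.map (Ideal.Quotient.mkₐ k Q).toLinearMap
      (if 0 ≤ j then homogeneousSubmodule (Fin 2) k j.toNat else ⊥)) :
    ∀ n : ℕ, reg G (I ^ n) (I ^ (n + 1)) = (d : ℤ) * (n + 1) + c n - 2 := by
  intro n
  have hmk : ∀ p t, Ideal.Quotient.mk Q p ∈ I ^ t ↔ p ∈ stairIdeal k c d m (d * t) := by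
    intro p t
    rw [hI, Ideal.Quotient.mk_mem_map_span_singleton_pow_iff, ← pow_mul, stairIdeal, hQ]
  have hN : ((c n - 1 + (d * (n + 1) - 1) : ℕ) : ℤ) = d * (n + 1) + c n - 2 := by
    have : 1 ≤ d * (n + 1) := Nat.one_le_iff_ne_zero.mpr (by positivity)
    push_cast [Nat.cast_sub this, Nat.cast_sub (hpos n)]
    ring
  rw [← hN]
  refine reg_eq_of_socle (u := Ideal.Quotient.mk Q (socleMonomial c d n))
    ((hmk _ _).mpr (socleMonomial_mem_stairIdeal hd n))
    (fun h => socleMonomial_notMem_stairIdeal_succ hpos hdec hd n ((hmk _ _).mp h))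
    (mk_mem_deg hdeg (socleMonomial_isHomogeneous n))
    (gen_mul_mk_mem hdeg fun j => (hmk _ _).mpr
      (X_mul_socleMonomial_mem_stairIdeal_succ hpos hd hm n j)) ?_
  intro e he r hr hrn
  obtain ⟨p, hp, rfl⟩ := exists_isHomogeneous_of_mem_deg hdeg (by omega) hr
  rw [hmk] at hrn ⊢
  exact mem_stairIdeal_succ_of_isHomogeneous hm hp (by omega) hrn

set_option synthInstance.maxHeartbeats 1000000 in
set_option maxHeartbeats 1000000 in
open MvPolynomial in
/-- For a weakly decreasing sequence of positive integers `c` that stabilizes exactly at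
index `m`, with `S = k[x,y]`, `Q = (x^{c_0}, x^{c_1}y^d, …, x^{c_m}y^{dm})`, `R = S/Q`
and `I = (y^d, Q)/Q`, one has `reg Iⁿ/Iⁿ⁺¹ = d(n+1) + cₙ - 2` for all `n ≥ 0`.
(`G` is the standard grading that `R` inherits from `S`.) -/
theorem stmt3 (c : ℕ → ℕ) (hpos : ∀ n, 1 ≤ c n) (hdec : ∀ n, c (n + 1) ≤ c n)
    (d : ℕ) (hd : 1 ≤ d) (m : ℕ)
    (hm : ∀ n, m < n → c n = c m)
    (hmin : ∀ m' : ℕ, (∀ n, m' < n → c n = c m') → m ≤ m')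
    (Q : Ideal (MvPolynomial (Fin 2) k))
    (hQ : Q = Ideal.span {q | ∃ i : ℕ, i ≤ m ∧ q = X 0 ^ c i * X 1 ^ (d * i)})
    (I : Ideal (MvPolynomial (Fin 2) k ⧸ Q))
    (hI : I = Ideal.map (Ideal.Quotient.mk Q) (Ideal.span {X 1 ^ d}))
    (G : StdGraded k (MvPolynomial (Fin 2) k ⧸ Q))
    (hdeg : ∀ j : ℤ, G.deg j = Submodule.map (Ideal.Quotient.mkₐ k Q).toLinearMap
      (if 0 ≤ j then homogeneousSubmodule (Fin 2) k j.toNat else ⊥)) :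
    ∀ n : ℕ, reg G (I ^ n) (I ^ (n + 1)) = (d : ℤ) * (n + 1) + c n - 2 :=
  stmt3_general c hpos hdec d hd m hm Q hQ I hI G hdeg
end

section
/- Let S = k[x_1, x_2, y_1, ..., y_m] over a field k, P = (y_1, ..., y_m), d ≥ 1 and c a positive integer. Let E and F be ideals generated by monomials of degree dn in y_1, ..., y_m such that E·P^{d−1} is not contained in F. Then reg P^{dn}/(x_1 P^{dn}, x_2^c E, F, P^{d(n+1)}) = d(n+1) + c − 2. -/
variable {k R : Type} [Field k] [CommRing R] [Algebra k R]

/-!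
Write `x₁ = X 0`, `x₂ = X 1`, `y_i = X (i + 2)` and `e₀ = d(n+1) + c - 2`. Both
`A = P^{dn}` and `B = (x₁P^{dn}, x₂^c E, F, P^{d(n+1)})` are monomial ideals, so membership in
them is decided exponent by exponent. In every degree `t > e₀`, multiplication by `x₂` maps
`(A/B)_{t-1}` isomorphically onto `(A/B)_t`, and the homotopy formula `∂(e ∧ f) + e ∧ ∂f = x₂ f`
on the Koszul complex, for a degree-one `e` with `∂e = x₂`, turns every Koszul cycle of `A/B`
with `j - i > e₀` into a boundary; hence `reg(A/B) ≤ e₀`. Conversely, if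
`y^α ∈ E·P^{d-1} \ F`, shrink `y^α` to a divisor `y^ρ` of degree `d(n+1) - 1` still divisible
by a generator of `E`; then `x₂^{c-1} y^ρ` lies in `A \ B` and every variable multiplies it
into `B`. This socle element of degree `e₀` gives `β_{r, e₀ + r}(A/B) ≠ 0`.
-/

open Finset MvPolynomial

theorem StdGraded.mul_mem_deg_add_one (G : StdGraded k R) {u w : R} {t : ℤ} (hu : u ∈ G.deg 1)
    (hw : w ∈ G.deg t) : u * w ∈ G.deg (t + 1) := by
  rcases lt_or_ge t 0 with ht | ht
  · rw [G.bot_of_neg t ht, Submodule.mem_bot] at hw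
    rw [hw, mul_zero]
    exact zero_mem _
  · lift t to ℕ using ht
    rw [G.standard]
    exact Submodule.mul_mem_mul hu hw

theorem neg_one_pow_mul_mem {V : Submodule k R} {x : R} (hx : x ∈ V) (e : ℕ) :
    (-1 : R) ^ e * x ∈ V := by
  simpa [Algebra.smul_def] using V.smul_mem ((-1 : k) ^ e) hx

section Koszul

variable (G : StdGraded k R)

theorem kosD_mem_ideal (I : Ideal R) {f : Finset (Fin G.ngens) → R} (hf : ∀ s, f s ∈ I)
    (t : Finset (Fin G.ngens)) : kosD G f t ∈ I :=
  sum_mem fun _ _ => I.mul_mem_left _ (hf _)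

theorem kosD_mem_deg {f : Finset (Fin G.ngens) → R} {e : ℤ} (hf : ∀ s, f s ∈ G.deg e)
    (t : Finset (Fin G.ngens)) : kosD G f t ∈ G.deg (e + 1) :=
  sum_mem fun j _ => by
    rw [mul_assoc]
    exact neg_one_pow_mul_mem (G.mul_mem_deg_add_one (G.gen_mem j) (hf _)) _

theorem kosD_sub (f g : Finset (Fin G.ngens) → R) (t : Finset (Fin G.ngens)) :
    kosD G (f - g) t = kosD G f t - kosD G g t := by
  simp only [kosD, Pi.sub_apply, ← sum_sub_distrib, mul_sub]

theorem kosD_mul_left (a : R) (f : Finset (Fin G.ngens) → R) (t : Finset (Fin G.ngens)) :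
    kosD G (fun s => a * f s) t = a * kosD G f t := by
  rw [kosD, kosD, mul_sum]
  exact sum_congr rfl fun _ _ => by ring

/-- Exterior multiplication by `∑ p, c p • e_p`, in the coordinates used by `kosD`. -/
noncomputable def kosWedge (c : Fin G.ngens → k) (f : Finset (Fin G.ngens) → R) :
    Finset (Fin G.ngens) → R := fun s =>
  ∑ p ∈ s, c p • ((-1 : R) ^ ((s.filter fun l => l < p).card) * f (s.erase p))

variable {G}

theorem kosWedge_mem_ideal (c : Fin G.ngens → k) (I : Ideal R) {f : Finset (Fin G.ngens) → R}
    (hf : ∀ s, f s ∈ I) (s : Finset (Fin G.ngens)) : kosWedge G c f s ∈ I :=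
  sum_mem fun _ _ => Submodule.smul_of_tower_mem _ _ (I.mul_mem_left _ (hf _))

theorem kosWedge_mem_deg (c : Fin G.ngens → k) {f : Finset (Fin G.ngens) → R} {e : ℤ}
    (hf : ∀ s, f s ∈ G.deg e) (s : Finset (Fin G.ngens)) : kosWedge G c f s ∈ G.deg e :=
  sum_mem fun _ _ => Submodule.smul_mem _ _ (neg_one_pow_mul_mem (hf _) _)

theorem kosWedge_eq_zero (c : Fin G.ngens → k) {f : Finset (Fin G.ngens) → R} {i : ℕ}
    (hf : ∀ s, s.card ≠ i → f s = 0) {s : Finset (Fin G.ngens)} (hs : s.card ≠ i + 1) :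
    kosWedge G c f s = 0 :=
  sum_eq_zero fun p hp => by
    rw [hf _ (by rw [card_erase_of_mem hp]; have := card_pos.mpr ⟨p, hp⟩; omega), mul_zero,
      smul_zero]

theorem neg_one_pow_mul_self (a : ℕ) : ((-1 : R) ^ a) * ((-1 : R) ^ a) = 1 := by
  rw [← pow_add]
  exact Even.neg_one_pow ⟨a, rfl⟩

theorem koszul_sign_swap {r : ℕ} (s : Finset (Fin r)) {p q : Fin r} (hp : p ∈ s) (hq : q ∉ s) :
    (-1 : R) ^ ((s.filter fun l => l < q).card) *
      (-1 : R) ^ (((insert q s).filter fun l => l < p).card) =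
    -((-1 : R) ^ ((s.filter fun l => l < p).card) *
      (-1 : R) ^ (((s.erase p).filter fun l => l < q).card)) := by
  have hpq : p ≠ q := fun h => hq (h ▸ hp)
  have herase : (s.erase p).filter (fun l => l < q) = (s.filter fun l => l < q).erase p :=
    filter_erase (p := fun l => l < q) p s
  rcases lt_or_gt_of_ne hpq with hlt | hgt
  · have hins : (insert q s).filter (fun l => l < p) = s.filter (fun l => l < p) := by
      rw [filter_insert, if_neg (fun h => lt_asymm h hlt)]
    have hpmem : p ∈ s.filter (fun l => l < q) := mem_filter.mpr ⟨hp, hlt⟩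
    rw [hins, herase, ← Nat.sub_add_cancel (card_pos.mpr ⟨p, hpmem⟩), pow_succ,
      ← card_erase_of_mem hpmem]
    ring
  · have hins : (insert q s).filter (fun l => l < p) = insert q (s.filter fun l => l < p) := by
      rw [filter_insert, if_pos hgt]
    have hpf : p ∉ s.filter (fun l => l < q) := fun h => lt_asymm (mem_filter.mp h).2 hgt
    have hqf : q ∉ s.filter (fun l => l < p) := fun h => hq (mem_filter.mp h).1
    rw [hins, herase, erase_eq_of_notMem hpf, card_insert_of_notMem hqf, pow_succ]
    ring

theorem kosD_kosWedge (c : Fin G.ngens → k) (f : Finset (Fin G.ngens) → R)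
    (s : Finset (Fin G.ngens)) :
    kosD G (kosWedge G c f) s =
      (∑ q ∈ sᶜ, c q • (G.gen q * f s)) +
      ∑ q ∈ sᶜ, ∑ p ∈ s, c p •
        (((-1 : R) ^ ((s.filter fun l => l < q).card) *
          (-1 : R) ^ (((insert q s).filter fun l => l < p).card)) *
          (G.gen q * f (insert q (s.erase p)))) := by
  rw [kosD, ← sum_add_distrib]
  refine sum_congr rfl fun q hq => ?_
  have hqs : q ∉ s := mem_compl.mp hq
  have hfilter : (insert q s).filter (fun l => l < q) = s.filter (fun l => l < q) := by
    rw [filter_insert, if_neg (lt_irrefl q)]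
  rw [kosWedge, sum_insert hqs, erase_insert hqs, mul_add, hfilter, mul_sum]
  congr 1
  · rw [mul_smul_comm]
    congr 1
    linear_combination
      (G.gen q * f s) * neg_one_pow_mul_self (R := R) (s.filter fun l => l < q).card
  · refine sum_congr rfl fun p hp => ?_
    rw [erase_insert_of_ne (ne_of_mem_of_not_mem hp hqs).symm, mul_smul_comm]
    congr 1
    ring

theorem kosWedge_kosD (c : Fin G.ngens → k) (f : Finset (Fin G.ngens) → R)
    (s : Finset (Fin G.ngens)) :
    kosWedge G c (kosD G f) s =
      (∑ p ∈ s, c p • (G.gen p * f s)) +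
      ∑ p ∈ s, ∑ q ∈ sᶜ, c p •
        (((-1 : R) ^ ((s.filter fun l => l < p).card) *
          (-1 : R) ^ (((s.erase p).filter fun l => l < q).card)) *
          (G.gen q * f (insert q (s.erase p)))) := by
  rw [kosWedge, ← sum_add_distrib]
  refine sum_congr rfl fun p hp => ?_
  have hps : p ∉ sᶜ := fun h => mem_compl.mp h hp
  have hfilter : (s.erase p).filter (fun l => l < p) = s.filter (fun l => l < p) := by
    rw [filter_erase (p := fun l => l < p) p s]
    exact erase_eq_of_notMem fun h => lt_irrefl p (mem_filter.mp h).2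
  rw [kosD, compl_erase, sum_insert hps, mul_add, smul_add, hfilter, insert_erase hp, mul_sum,
    smul_sum]
  congr 1
  · congr 1
    linear_combination
      (G.gen p * f s) * neg_one_pow_mul_self (R := R) (s.filter fun l => l < p).card
  · exact sum_congr rfl fun q _ => by congr 1; ring

theorem kosD_kosWedge_add_kosWedge_kosD (c : Fin G.ngens → k) (f : Finset (Fin G.ngens) → R)
    (s : Finset (Fin G.ngens)) :
    kosD G (kosWedge G c f) s + kosWedge G c (kosD G f) s = (∑ p, c p • G.gen p) * f s := by
  rw [kosD_kosWedge, kosWedge_kosD, add_add_add_comm, sum_comm (s := sᶜ) (t := s),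
    ← sum_add_distrib (s := s)]
  have hcross : ∀ p ∈ s, ∑ q ∈ sᶜ, c p •
        (((-1 : R) ^ ((s.filter fun l => l < q).card) *
          (-1 : R) ^ (((insert q s).filter fun l => l < p).card)) *
          (G.gen q * f (insert q (s.erase p)))) +
      ∑ q ∈ sᶜ, c p •
        (((-1 : R) ^ ((s.filter fun l => l < p).card) *
          (-1 : R) ^ (((s.erase p).filter fun l => l < q).card)) *
          (G.gen q * f (insert q (s.erase p)))) = 0 := fun p hp => by
    rw [← sum_add_distrib]
    exact sum_eq_zero fun q hq => by
      rw [← smul_add, ← add_mul, koszul_sign_swap s hp (mem_compl.mp hq), neg_add_cancel,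
        zero_mul, smul_zero]
  rw [sum_eq_zero hcross, add_zero, add_comm, sum_add_sum_compl, sum_mul]
  exact sum_congr rfl fun p _ => (smul_mul_assoc _ _ _).symm

end Koszul

section Regularity

variable (G : StdGraded k R)

theorem sub_le_of_torNonzero (A B : Ideal R) (e₀ : ℤ) (c : Fin G.ngens → k)
    (hsurj : ∀ t > e₀, ∀ a ∈ A, a ∈ G.deg t →
      ∃ a' ∈ A, a' ∈ G.deg (t - 1) ∧ a - (∑ p, c p • G.gen p) * a' ∈ B)
    (hinj : ∀ t > e₀, ∀ a ∈ A, a ∈ G.deg t → (∑ p, c p • G.gen p) * a ∈ B → a ∈ B)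
    {i : ℕ} {j : ℤ} (htor : TorNonzero G A B i j) : j - i ≤ e₀ := by
  by_contra! hgt
  obtain ⟨f, hf, hfB, hnot⟩ := htor
  set l := ∑ p, c p • G.gen p
  have hlift : ∀ s, ∃ a' ∈ A, a' ∈ G.deg (j - i - 1) ∧ (s.card ≠ i → a' = 0) ∧
      f s - l * a' ∈ B := by
    intro s
    have hfs := hf s
    split_ifs at hfs with hs
    · obtain ⟨a', ha'A, ha'deg, ha'B⟩ := hsurj _ hgt _ hfs.1 hfs.2
      exact ⟨a', ha'A, ha'deg, fun h => absurd hs h, ha'B⟩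
    · exact ⟨0, zero_mem _, zero_mem _, fun _ => rfl, by simp [hfs]⟩
  choose f' hf'A hf'deg hf'0 hf'B using hlift
  have hcycle : ∀ t, kosD G f' t ∈ B := by
    intro t
    refine hinj _ hgt _ (kosD_mem_ideal G A hf'A t)
      (sub_add_cancel (j - i) 1 ▸ kosD_mem_deg G hf'deg t) ?_
    have hlf' : (fun s => l * f' s) = f - fun s => f s - l * f' s := by
      funext s
      simp
    rw [← kosD_mul_left, hlf', kosD_sub]
    exact sub_mem (hfB t) (kosD_mem_ideal G B hf'B t)
  refine hnot ⟨kosWedge G c f', fun s => ?_, fun s => ?_⟩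
  · split_ifs with hs
    · exact ⟨kosWedge_mem_ideal c A hf'A s, kosWedge_mem_deg c hf'deg s⟩
    · exact kosWedge_eq_zero c hf'0 hs
  · have hhomotopy := kosD_kosWedge_add_kosWedge_kosD c f' s
    rw [← eq_sub_iff_add_eq] at hhomotopy
    rw [hhomotopy, sub_sub_eq_add_sub, add_sub_right_comm]
    exact add_mem (hf'B s) (kosWedge_mem_ideal c B hcycle s)

theorem torNonzero_ngens_of_socle_s6 (A B : Ideal R) {e : ℤ} {v : R} (hvA : v ∈ A)
    (hv : v ∈ G.deg e) (hvm : ∀ p, G.gen p * v ∈ B) (hvB : v ∉ B) :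
    TorNonzero G A B G.ngens (e + G.ngens) := by
  have hcard : ∀ s : Finset (Fin G.ngens), s.card = G.ngens ↔ s = univ := fun s => by
    simpa using card_eq_iff_eq_univ s
  refine ⟨fun s => if s = univ then v else 0, fun s => ?_, fun t => ?_, ?_⟩
  · simp only [hcard, add_sub_cancel_right]
    split_ifs
    exacts [⟨hvA, hv⟩, rfl]
  · refine sum_mem fun q _ => ?_
    dsimp only
    split_ifs
    · rw [mul_assoc]
      exact B.mul_mem_left _ (hvm q)
    · rw [mul_zero]
      exact zero_mem _
  · rintro ⟨g, hg, hbd⟩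
    have hg0 : ∀ s, g s = 0 := fun s => by
      simpa [show s.card ≠ G.ngens + 1 by have := card_le_univ s; simp at this; omega]
        using hg s
    exact hvB (by simpa [kosD, hg0] using hbd univ)

theorem reg_eq_of_socle_s6 (A B : Ideal R) (e₀ : ℤ) (c : Fin G.ngens → k)
    (hsurj : ∀ t > e₀, ∀ a ∈ A, a ∈ G.deg t →
      ∃ a' ∈ A, a' ∈ G.deg (t - 1) ∧ a - (∑ p, c p • G.gen p) * a' ∈ B)
    (hinj : ∀ t > e₀, ∀ a ∈ A, a ∈ G.deg t → (∑ p, c p • G.gen p) * a ∈ B → a ∈ B)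
    {v : R} (hvA : v ∈ A) (hv : v ∈ G.deg e₀) (hvm : ∀ p, G.gen p * v ∈ B) (hvB : v ∉ B) :
    reg G A B = e₀ := by
  refine IsGreatest.csSup_eq ⟨⟨G.ngens, e₀ + G.ngens, by ring,
    torNonzero_ngens_of_socle_s6 G A B hvA hv hvm hvB⟩, ?_⟩
  rintro _ ⟨i, j, rfl, htor⟩
  exact sub_le_of_torNonzero G A B e₀ c hsurj hinj htor

theorem reg_eq_of_X_mul_bijective {ι : Type} (G : StdGraded k (MvPolynomial ι k))
    (hdeg : ∀ N : ℕ, G.deg N = homogeneousSubmodule ι k N) (A B : Ideal (MvPolynomial ι k))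
    (N₀ : ℕ) (i₀ : ι)
    (hsurj : ∀ N > N₀, ∀ p ∈ A, p.IsHomogeneous N →
      ∃ p' ∈ A, p'.IsHomogeneous (N - 1) ∧ p - X i₀ * p' ∈ B)
    (hinj : ∀ N > N₀, ∀ p ∈ A, p.IsHomogeneous N → X i₀ * p ∈ B → p ∈ B)
    {v : MvPolynomial ι k} (hvA : v ∈ A) (hv : v.IsHomogeneous N₀) (hvm : ∀ i, X i * v ∈ B)
    (hvB : v ∉ B) : reg G A B = N₀ := by
  have hmem : ∀ {N : ℕ} {p}, p ∈ G.deg N ↔ p.IsHomogeneous N := by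
    intro N p
    rw [hdeg, mem_homogeneousSubmodule]
  have hdeg₁ : G.deg 1 = Submodule.span k (Set.range X) := by
    simpa using (hdeg 1).trans homogeneousSubmodule_one_eq_span_X
  have hX : X i₀ ∈ Submodule.span k (Set.range G.gen) :=
    G.gen_span ▸ hdeg₁ ▸ Submodule.subset_span ⟨i₀, rfl⟩
  obtain ⟨c, hc⟩ := (Submodule.mem_span_range_iff_exists_fun k).mp hX
  refine reg_eq_of_socle_s6 G A B N₀ c (fun t ht a ha hat => ?_) (fun t ht a ha hat hla => ?_) hvA
    (hmem.mpr hv) (fun p => ?_) hvB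
  · lift t to ℕ using (by omega)
    obtain ⟨p', hp'A, hp', hp'B⟩ := hsurj t (by omega) a ha (hmem.mp hat)
    refine ⟨p', hp'A, ?_, by rwa [hc]⟩
    rw [show (t : ℤ) - 1 = ((t - 1 : ℕ) : ℤ) by omega]
    exact hmem.mpr hp'
  · lift t to ℕ using (by omega)
    exact hinj t (by omega) a ha (hmem.mp hat) (by rwa [hc] at hla)
  · have hspan : Submodule.span k (Set.range X) ≤ (B.colon {v}).restrictScalars k :=
      Submodule.span_le.mpr <| Set.range_subset_iff.mpr fun i =>
        Submodule.mem_colon_singleton.mpr (hvm i)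
    exact Submodule.mem_colon_singleton.mp (hspan (hdeg₁ ▸ G.gen_mem p))

end Regularity

open scoped Pointwise

section MonomialIdeal

variable {σ S : Type*} [CommSemiring S]

theorem mem_restrictSupportIdeal {s : Set (σ →₀ ℕ)} {hs : IsUpperSet s} {p : MvPolynomial σ S} :
    p ∈ restrictSupportIdeal S s hs ↔ ↑p.support ⊆ s :=
  Iff.rfl

theorem monomial_one_mem_restrictSupportIdeal [Nontrivial S] {s : Set (σ →₀ ℕ)}
    {hs : IsUpperSet s} {α : σ →₀ ℕ} :
    monomial α (1 : S) ∈ restrictSupportIdeal S s hs ↔ α ∈ s := by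
  change monomial α (1 : S) ∈ restrictSupport S s ↔ α ∈ s
  simp

theorem span_monomial_image_eq_restrictSupportIdeal (t : Set (σ →₀ ℕ)) :
    Ideal.span ((fun α => monomial α (1 : S)) '' t) =
      restrictSupportIdeal S (upperClosure t : Set (σ →₀ ℕ)) (upperClosure t).upper := by
  ext p
  rw [mem_ideal_span_monomial_image, mem_restrictSupportIdeal]
  exact ⟨fun h α hα => mem_upperClosure.mpr (h α hα), fun h α hα => mem_upperClosure.mp (h hα)⟩

theorem restrictSupportIdeal_mono {s t : Set (σ →₀ ℕ)} (hs : IsUpperSet s) (ht : IsUpperSet t)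
    (hst : s ⊆ t) : restrictSupportIdeal S s hs ≤ restrictSupportIdeal S t ht :=
  fun _ hp => hp.trans hst

theorem restrictSupportIdeal_le {s : Set (σ →₀ ℕ)} (hs : IsUpperSet s)
    {I : Ideal (MvPolynomial σ S)} (h : ∀ α ∈ s, monomial α (1 : S) ∈ I) :
    restrictSupportIdeal S s hs ≤ I := by
  intro p hp
  have hp' : p ∈ restrictSupport S s := hp
  rw [restrictSupport_eq_span] at hp'
  exact (Submodule.span_le (p := I.restrictScalars S)).mpr
    (by rintro _ ⟨α, hα, rfl⟩; exact h α hα) hp'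

theorem restrictSupportIdeal_mul_le {s t u : Set (σ →₀ ℕ)} (hs : IsUpperSet s)
    (ht : IsUpperSet t) (hu : IsUpperSet u) (hstu : s + t ⊆ u) :
    restrictSupportIdeal S s hs * restrictSupportIdeal S t ht ≤ restrictSupportIdeal S u hu :=
  Ideal.mul_le.mpr fun _ hp _ hq => restrictSupport_mono S hstu <| by
    rw [restrictSupport_add]
    exact Submodule.mul_mem_mul hp hq

theorem restrictSupportIdeal_mul {s t u : Set (σ →₀ ℕ)} (hs : IsUpperSet s)
    (ht : IsUpperSet t) (hu : IsUpperSet u) (hstu : s + t = u) :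
    restrictSupportIdeal S s hs * restrictSupportIdeal S t ht = restrictSupportIdeal S u hu := by
  apply Submodule.restrictScalars_injective S
  rw [Ideal.restrictScalars_mul, restrictScalars_restrictSupportIdeal,
    restrictScalars_restrictSupportIdeal, restrictScalars_restrictSupportIdeal, ← hstu,
    restrictSupport_add]

theorem monomial_one_eq_mul_of_le {α β : σ →₀ ℕ} (h : β ≤ α) :
    monomial α (1 : S) = monomial β 1 * monomial (α - β) 1 := by
  rw [monomial_mul, one_mul, add_tsub_cancel_of_le h]

theorem MvPolynomial.IsHomogeneous.degree_eq_of_mem_support {φ : MvPolynomial σ S} {n : ℕ}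
    (hφ : φ.IsHomogeneous n) {α : σ →₀ ℕ} (hα : α ∈ φ.support) : α.degree = n := by
  rw [Finsupp.degree_eq_weight_one]
  exact hφ (mem_support_iff.mp hα)

theorem MvPolynomial.isHomogeneous_iff_degree_eq {φ : MvPolynomial σ S} {n : ℕ} :
    φ.IsHomogeneous n ↔ ∀ α ∈ φ.support, α.degree = n := by
  refine ⟨fun h α hα => h.degree_eq_of_mem_support hα, fun h α hα => ?_⟩
  have := h α (mem_support_iff.mpr hα)
  rwa [Finsupp.degree_eq_weight_one] at this

theorem span_singleton_X_pow_eq_restrictSupportIdeal (i : σ) (e : ℕ) :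
    Ideal.span {(X i : MvPolynomial σ S) ^ e} =
      restrictSupportIdeal S {α | e ≤ α i} (fun _ _ h hα => le_trans hα (h i)) := by
  rw [X_pow_eq_monomial, ← Set.image_singleton (f := fun α => monomial α (1 : S)),
    span_monomial_image_eq_restrictSupportIdeal]
  congr 1
  ext α
  simp [Finsupp.single_le_iff]

end MonomialIdeal

section Exponents

variable {m : ℕ}

def ydeg (α : Fin (m + 2) →₀ ℕ) : ℕ := ∑ i : Fin m, α i.succ.succ

theorem ydeg_add (α β : Fin (m + 2) →₀ ℕ) : ydeg (α + β) = ydeg α + ydeg β := by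
  simp [ydeg, sum_add_distrib]

theorem ydeg_mono {α β : Fin (m + 2) →₀ ℕ} (h : α ≤ β) : ydeg α ≤ ydeg β :=
  sum_le_sum fun i _ => h i.succ.succ

theorem ydeg_tsub {α β : Fin (m + 2) →₀ ℕ} (h : β ≤ α) : ydeg (α - β) = ydeg α - ydeg β := by
  have := ydeg_add β (α - β)
  rw [add_tsub_cancel_of_le h] at this
  omega

theorem ydeg_single_zero (e : ℕ) : ydeg (Finsupp.single (0 : Fin (m + 2)) e) = 0 := by
  simp [ydeg, Fin.succ_ne_zero]

theorem ydeg_single_one (e : ℕ) : ydeg (Finsupp.single (1 : Fin (m + 2)) e) = 0 := by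
  simp [ydeg, Fin.succ_succ_ne_one]

theorem ydeg_single_succ_succ (i : Fin m) (e : ℕ) :
    ydeg (Finsupp.single (i.succ.succ : Fin (m + 2)) e) = e := by
  simp [ydeg, Finsupp.single_apply]

theorem degree_eq_add_ydeg (α : Fin (m + 2) →₀ ℕ) : α.degree = α 0 + α 1 + ydeg α := by
  rw [Finsupp.degree_eq_sum, Fin.sum_univ_succ, Fin.sum_univ_succ, ydeg, Fin.succ_zero_eq_one]
  ring

theorem one_le_ydeg_iff {α : Fin (m + 2) →₀ ℕ} : 1 ≤ ydeg α ↔ ∃ i : Fin m, α i.succ.succ ≠ 0 := by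
  rw [Nat.one_le_iff_ne_zero, ydeg, Ne, sum_eq_zero_iff]
  simp

theorem isUpperSet_ydeg_le (w : ℕ) : IsUpperSet {α : Fin (m + 2) →₀ ℕ | w ≤ ydeg α} :=
  fun _ _ h hα => le_trans hα (ydeg_mono h)

theorem le_of_le_single_add {i : Fin (m + 2)} {e : ℕ} {σ α : Fin (m + 2) →₀ ℕ} (hσ : σ i = 0)
    (h : σ ≤ Finsupp.single i e + α) : σ ≤ α := by
  intro j
  rcases eq_or_ne j i with rfl | hj
  · simp [hσ]
  · simpa [Finsupp.single_apply, hj.symm] using h j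

variable (m) in
def yExponents (w : ℕ) : Set (Fin (m + 2) →₀ ℕ) := {σ | σ 0 = 0 ∧ σ 1 = 0 ∧ ydeg σ = w}

theorem exists_mem_yExponents_between {w₀ w : ℕ} {σ α : Fin (m + 2) →₀ ℕ}
    (hσ : σ ∈ yExponents m w₀) (hσα : σ ≤ α) (hw₀ : w₀ ≤ w) (hw : w ≤ ydeg α) :
    ∃ ρ ∈ yExponents m w, σ ≤ ρ ∧ ρ ≤ α := by
  obtain ⟨t, rfl⟩ := Nat.exists_eq_add_of_le hw₀
  induction t generalizing σ w₀ with
  | zero => exact ⟨σ, hσ, le_rfl, hσα⟩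
  | succ t ih =>
    obtain ⟨i, hi⟩ : ∃ i : Fin m, σ i.succ.succ < α i.succ.succ := by
      by_contra! hle
      have : ydeg α ≤ ydeg σ := sum_le_sum fun i _ => hle i
      have := hσ.2.2
      omega
    have hσ' : σ + Finsupp.single i.succ.succ 1 ∈ yExponents m (w₀ + 1) := by
      refine ⟨?_, ?_, ?_⟩
      · simp [hσ.1, Fin.succ_ne_zero]
      · simp [hσ.2.1, (Fin.succ_succ_ne_one _).symm]
      · rw [ydeg_add, ydeg_single_succ_succ, hσ.2.2]
    have hle : σ + Finsupp.single i.succ.succ 1 ≤ α := by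
      intro j
      rcases eq_or_ne j i.succ.succ with rfl | hj
      · simpa using hi
      · simpa [Finsupp.single_apply, hj.symm] using hσα j
    obtain ⟨ρ, hρ, hσρ, hρα⟩ := ih hσ' hle (by omega) (by omega)
    rw [show w₀ + 1 + t = w₀ + (t + 1) by omega] at hρ
    exact ⟨ρ, hρ, le_trans le_self_add hσρ, hρα⟩

theorem prod_X_succ_succ_pow (a : Fin m → ℕ) :
    (∏ i, (X i.succ.succ : MvPolynomial (Fin (m + 2)) k) ^ a i) =
      monomial (∑ i, Finsupp.single i.succ.succ (a i)) 1 := by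
  simp [X_pow_eq_monomial, monomial_sum_one]

theorem sum_single_mem_yExponents (a : Fin m → ℕ) :
    ∑ i, Finsupp.single (i.succ.succ : Fin (m + 2)) (a i) ∈ yExponents m (∑ i, a i) := by
  refine ⟨?_, ?_, ?_⟩
  · simp [Fin.succ_ne_zero]
  · simp [(Fin.succ_succ_ne_one _).symm]
  · simp [ydeg, Finsupp.single_apply]

theorem exists_yExponents_of_prod_X_pow {w : ℕ} {I : Ideal (MvPolynomial (Fin (m + 2)) k)}
    (h : ∃ T : Set (MvPolynomial (Fin (m + 2)) k),
      (∀ q ∈ T, ∃ a : Fin m → ℕ, (∑ i, a i) = w ∧ q = ∏ i, X i.succ.succ ^ a i) ∧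
      I = Ideal.span T) :
    ∃ S ⊆ yExponents m w, I = Ideal.span ((fun σ => monomial σ (1 : k)) '' S) := by
  obtain ⟨T, hT, rfl⟩ := h
  refine ⟨{σ | σ ∈ yExponents m w ∧ monomial σ 1 ∈ T}, fun σ hσ => hσ.1, congrArg _ ?_⟩
  ext q
  refine ⟨fun hq => ?_, fun ⟨σ, hσ, hq⟩ => hq ▸ hσ.2⟩
  obtain ⟨a, rfl, rfl⟩ := hT q hq
  rw [prod_X_succ_succ_pow] at hq ⊢
  exact ⟨_, ⟨sum_single_mem_yExponents a, hq⟩, rfl⟩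

end Exponents
section Ideals

variable {m : ℕ}

variable (k m) in
noncomputable def yIdeal : Ideal (MvPolynomial (Fin (m + 2)) k) :=
  Ideal.span (Set.range fun i : Fin m => X i.succ.succ)

theorem yIdeal_eq_restrictSupportIdeal :
    yIdeal k m = restrictSupportIdeal k {α | 1 ≤ ydeg α} (isUpperSet_ydeg_le 1) := by
  ext p
  rw [yIdeal, Set.range_comp' X, mem_ideal_span_X_image, mem_restrictSupportIdeal]
  simp [Set.subset_def, one_le_ydeg_iff]

theorem yIdeal_pow_eq_restrictSupportIdeal (w : ℕ) :
    yIdeal k m ^ w = restrictSupportIdeal k {α | w ≤ ydeg α} (isUpperSet_ydeg_le w) := by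
  induction w with
  | zero =>
    ext p
    simp [mem_restrictSupportIdeal, Set.subset_def]
  | succ w ih =>
    rw [pow_succ, ih, yIdeal_eq_restrictSupportIdeal]
    apply restrictSupportIdeal_mul
    ext α
    simp only [Set.mem_add, Set.mem_ofPred_eq]
    constructor
    · rintro ⟨β, hβ, γ, hγ, rfl⟩
      rw [ydeg_add]
      omega
    · intro hα
      obtain ⟨i, hi⟩ := one_le_ydeg_iff.mp (by omega : 1 ≤ ydeg α)
      have hle : Finsupp.single i.succ.succ 1 ≤ α := Finsupp.single_le_iff.mpr (by omega)
      refine ⟨α - Finsupp.single i.succ.succ 1, ?_, _, ?_, tsub_add_cancel_of_le hle⟩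
      · rw [ydeg_tsub hle, ydeg_single_succ_succ]
        omega
      · rw [ydeg_single_succ_succ]

theorem mem_yIdeal_pow {w : ℕ} {p : MvPolynomial (Fin (m + 2)) k} :
    p ∈ yIdeal k m ^ w ↔ ∀ α ∈ p.support, w ≤ ydeg α := by
  rw [yIdeal_pow_eq_restrictSupportIdeal]
  rfl

theorem monomial_one_mem_yIdeal_pow {w : ℕ} {α : Fin (m + 2) →₀ ℕ} :
    monomial α (1 : k) ∈ yIdeal k m ^ w ↔ w ≤ ydeg α := by
  rw [yIdeal_pow_eq_restrictSupportIdeal, monomial_one_mem_restrictSupportIdeal]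
  rfl

end Ideals

section Denominator

variable {m : ℕ} (a b c : ℕ) (SE SF : Set (Fin (m + 2) →₀ ℕ))

def denomExponents : Set (Fin (m + 2) →₀ ℕ) :=
  {α | (1 ≤ α 0 ∧ a ≤ ydeg α) ∨ (c ≤ α 1 ∧ α ∈ upperClosure SE) ∨ α ∈ upperClosure SF ∨
    b ≤ ydeg α}

theorem isUpperSet_denomExponents : IsUpperSet (denomExponents a b c SE SF) := by
  rintro α β hαβ (⟨h0, ha⟩ | ⟨h1, hE⟩ | hF | hb)
  · exact Or.inl ⟨h0.trans (hαβ 0), ha.trans (ydeg_mono hαβ)⟩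
  · exact Or.inr (Or.inl ⟨h1.trans (hαβ 1), (upperClosure SE).upper hαβ hE⟩)
  · exact Or.inr (Or.inr (Or.inl ((upperClosure SF).upper hαβ hF)))
  · exact Or.inr (Or.inr (Or.inr (hb.trans (ydeg_mono hαβ))))

variable (k) in
noncomputable def denomIdeal : Ideal (MvPolynomial (Fin (m + 2)) k) :=
  restrictSupportIdeal k (denomExponents a b c SE SF) (isUpperSet_denomExponents a b c SE SF)

variable {a b c SE SF}

theorem mem_denomIdeal {p : MvPolynomial (Fin (m + 2)) k} :
    p ∈ denomIdeal k a b c SE SF ↔ ∀ α ∈ p.support, α ∈ denomExponents a b c SE SF :=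
  Iff.rfl

theorem denomIdeal_eq (hSE : SE ⊆ yExponents m a) :
    denomIdeal k a b c SE SF =
      Ideal.span {X (0 : Fin (m + 2))} * yIdeal k m ^ a ⊔
        Ideal.span {X (1 : Fin (m + 2)) ^ c} * Ideal.span ((fun σ => monomial σ (1 : k)) '' SE) ⊔
        Ideal.span ((fun σ => monomial σ (1 : k)) '' SF) ⊔ yIdeal k m ^ b := by
  refine le_antisymm (restrictSupportIdeal_le _ fun α hα => ?_)
    (sup_le (sup_le (sup_le ?_ ?_) ?_) ?_)
  · rcases hα with ⟨h0, ha⟩ | ⟨h1, σ, hσ, hσα⟩ | ⟨σ, hσ, hσα⟩ | hb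
    · have hle : Finsupp.single 0 1 ≤ α := Finsupp.single_le_iff.mpr h0
      refine Ideal.mem_sup_left (Ideal.mem_sup_left (Ideal.mem_sup_left ?_))
      rw [monomial_one_eq_mul_of_le hle]
      refine Ideal.mul_mem_mul (Ideal.mem_span_singleton_self _) ?_
      rwa [monomial_one_mem_yIdeal_pow, ydeg_tsub hle, ydeg_single_zero, Nat.sub_zero]
    · have hle : Finsupp.single 1 c + σ ≤ α := by
        intro j
        rcases eq_or_ne j 1 with rfl | hj
        · simpa [(hSE hσ).2.1] using h1
        · simpa [Finsupp.single_apply, hj.symm] using hσα j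
      have hgen : monomial (Finsupp.single 1 c + σ) (1 : k) = X 1 ^ c * monomial σ 1 := by
        rw [X_pow_eq_monomial, monomial_mul, one_mul]
      refine Ideal.mem_sup_left (Ideal.mem_sup_left (Ideal.mem_sup_right ?_))
      rw [monomial_one_eq_mul_of_le hle, hgen]
      exact Ideal.mul_mem_right _ _
        (Ideal.mul_mem_mul (Ideal.mem_span_singleton_self _) (Ideal.subset_span ⟨σ, hσ, rfl⟩))
    · refine Ideal.mem_sup_left (Ideal.mem_sup_right ?_)
      rw [monomial_one_eq_mul_of_le hσα]
      exact Ideal.mul_mem_right _ _ (Ideal.subset_span ⟨σ, hσ, rfl⟩)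
    · exact Ideal.mem_sup_right (monomial_one_mem_yIdeal_pow.mpr hb)
  · rw [← pow_one (X 0), span_singleton_X_pow_eq_restrictSupportIdeal,
      yIdeal_pow_eq_restrictSupportIdeal]
    refine restrictSupportIdeal_mul_le _ _ _ (Set.add_subset_iff.mpr fun β hβ γ hγ => ?_)
    refine Or.inl ⟨le_add_right hβ, ?_⟩
    rw [ydeg_add]
    exact le_add_left hγ
  · rw [span_singleton_X_pow_eq_restrictSupportIdeal, span_monomial_image_eq_restrictSupportIdeal]
    refine restrictSupportIdeal_mul_le _ _ _ (Set.add_subset_iff.mpr fun β hβ γ hγ => ?_)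
    exact Or.inr (Or.inl ⟨le_add_right hβ, (upperClosure SE).upper le_add_self hγ⟩)
  · rw [span_monomial_image_eq_restrictSupportIdeal]
    exact restrictSupportIdeal_mono _ _ fun α hα => Or.inr (Or.inr (Or.inl hα))
  · rw [yIdeal_pow_eq_restrictSupportIdeal]
    exact restrictSupportIdeal_mono _ _ fun α hα => Or.inr (Or.inr (Or.inr hα))

theorem mem_denomExponents_of_single_one_add (hSE : SE ⊆ yExponents m a)
    (hSF : SF ⊆ yExponents m a) {α : Fin (m + 2) →₀ ℕ} (ha : a ≤ ydeg α)
    (hdeg : b + c ≤ α.degree + 1) (h : Finsupp.single 1 1 + α ∈ denomExponents a b c SE SF) :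
    α ∈ denomExponents a b c SE SF := by
  have hupper : ∀ {S : Set (Fin (m + 2) →₀ ℕ)}, S ⊆ yExponents m a →
      Finsupp.single 1 1 + α ∈ upperClosure S → α ∈ upperClosure S := by
    rintro S hS ⟨σ, hσ, hσα⟩
    exact ⟨σ, hσ, le_of_le_single_add (hS hσ).2.1 hσα⟩
  rcases h with ⟨h0, -⟩ | ⟨-, hE⟩ | hF | hb
  · exact Or.inl ⟨by simpa using h0, ha⟩
  · rcases le_or_gt c (α 1) with h1 | h1
    · exact Or.inr (Or.inl ⟨h1, hupper hSE hE⟩)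
    · rcases Nat.eq_zero_or_pos (α 0) with h0 | h0
      · rw [degree_eq_add_ydeg] at hdeg
        exact Or.inr (Or.inr (Or.inr (by omega)))
      · exact Or.inl ⟨h0, ha⟩
  · exact Or.inr (Or.inr (Or.inl (hupper hSF hF)))
  · rw [ydeg_add, ydeg_single_one, zero_add] at hb
    exact Or.inr (Or.inr (Or.inr hb))

theorem mem_denomIdeal_of_X_one_mul_mem (hSE : SE ⊆ yExponents m a)
    (hSF : SF ⊆ yExponents m a) {N : ℕ} (hN : b + c ≤ N + 1) {p : MvPolynomial (Fin (m + 2)) k}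
    (hp : p ∈ yIdeal k m ^ a) (hh : p.IsHomogeneous N) (hXp : X 1 * p ∈ denomIdeal k a b c SE SF) :
    p ∈ denomIdeal k a b c SE SF := by
  refine mem_denomIdeal.mpr fun α hα => ?_
  refine mem_denomExponents_of_single_one_add hSE hSF (mem_yIdeal_pow.mp hp α hα)
    (by rw [hh.degree_eq_of_mem_support hα]; exact hN) (mem_denomIdeal.mp hXp _ ?_)
  rw [mem_support_iff, coeff_X_mul]
  exact mem_support_iff.mp hα

theorem exists_sub_X_one_mul_mem_denomIdeal (hc : 1 ≤ c) {N : ℕ} (hN : b + c ≤ N + 1)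
    {p : MvPolynomial (Fin (m + 2)) k} (hp : p ∈ yIdeal k m ^ a) (hh : p.IsHomogeneous N) :
    ∃ p' ∈ yIdeal k m ^ a, p'.IsHomogeneous (N - 1) ∧ p - X 1 * p' ∈ denomIdeal k a b c SE SF := by
  have hdiv : ∀ β ∈ (p.divMonomial (Finsupp.single 1 1)).support,
      Finsupp.single 1 1 + β ∈ p.support := fun β hβ => by
    rwa [mem_support_iff, coeff_divMonomial, ← mem_support_iff] at hβ
  refine ⟨p.divMonomial (Finsupp.single 1 1), mem_yIdeal_pow.mpr fun β hβ => ?_,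
    isHomogeneous_iff_degree_eq.mpr fun β hβ => ?_, ?_⟩
  · simpa [ydeg_add, ydeg_single_one] using mem_yIdeal_pow.mp hp _ (hdiv β hβ)
  · have := hh.degree_eq_of_mem_support (hdiv β hβ)
    rw [map_add, Finsupp.degree_single] at this
    omega
  · rw [← eq_sub_of_add_eq' (divMonomial_add_modMonomial_single p 1)]
    refine mem_denomIdeal.mpr fun α hα => ?_
    have hα1 : ¬ Finsupp.single 1 1 ≤ α := fun hle =>
      mem_support_iff.mp hα (coeff_modMonomial_of_le _ hle)
    rw [mem_support_iff, coeff_modMonomial_of_not_le _ hα1,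
      ← mem_support_iff] at hα
    rw [Finsupp.single_le_iff, not_le, Nat.lt_one_iff] at hα1
    rcases Nat.eq_zero_or_pos (α 0) with h0 | h0
    · have hdeg := hh.degree_eq_of_mem_support hα
      rw [degree_eq_add_ydeg] at hdeg
      exact Or.inr (Or.inr (Or.inr (by omega)))
    · exact Or.inl ⟨h0, mem_yIdeal_pow.mp hp α hα⟩

theorem exists_socle_exponent (hab : a < b) (hc : 1 ≤ c) (hSE : SE ⊆ yExponents m a)
    (hSF : SF ⊆ yExponents m a) {α : Fin (m + 2) →₀ ℕ} (hαE : α ∈ upperClosure SE)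
    (hα : b - 1 ≤ ydeg α) (hαF : α ∉ upperClosure SF) :
    ∃ w, a ≤ ydeg w ∧ w.degree = b + c - 2 ∧ w ∉ denomExponents a b c SE SF ∧
      ∀ β, 1 ≤ β.degree → β + w ∈ denomExponents a b c SE SF := by
  obtain ⟨σ, hσ, hσα⟩ := hαE
  obtain ⟨ρ, hρ, hσρ, hρα⟩ := exists_mem_yExponents_between (hSE hσ) hσα (by omega) hα
  set w := Finsupp.single (1 : Fin (m + 2)) (c - 1) + ρ with hw
  have hw0 : w 0 = 0 := by simp [hw, hρ.1]
  have hw1 : w 1 = c - 1 := by simp [hw, hρ.2.1]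
  have hwy : ydeg w = b - 1 := by rw [hw, ydeg_add, ydeg_single_one, hρ.2.2, zero_add]
  refine ⟨w, by omega, ?_, ?_, fun β hβ => ?_⟩
  · rw [degree_eq_add_ydeg, hw0, hw1, hwy]
    omega
  · rintro (⟨h0, -⟩ | ⟨h1, -⟩ | ⟨θ, hθ, hθw⟩ | hb)
    · omega
    · omega
    · exact hαF ⟨θ, hθ, (le_of_le_single_add (hSF hθ).2.1 hθw).trans hρα⟩
    · omega
  · rw [degree_eq_add_ydeg] at hβ
    by_cases h0 : 1 ≤ β 0
    · refine Or.inl ⟨by simp only [Finsupp.add_apply]; omega, ?_⟩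
      rw [ydeg_add, hwy]
      omega
    by_cases h1 : 1 ≤ β 1
    · refine Or.inr (Or.inl ⟨by simp only [Finsupp.add_apply]; omega, σ, hσ, ?_⟩)
      exact hσρ.trans (le_add_self.trans le_add_self)
    · refine Or.inr (Or.inr (Or.inr ?_))
      rw [ydeg_add, hwy]
      omega

theorem exists_exponent_of_not_mul_le (hSE : SE ⊆ yExponents m a) {e : ℕ}
    (h : ¬ Ideal.span ((fun σ => monomial σ (1 : k)) '' SE) * yIdeal k m ^ e ≤
      Ideal.span ((fun σ => monomial σ (1 : k)) '' SF)) :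
    ∃ α ∈ upperClosure SE, a + e ≤ ydeg α ∧ α ∉ upperClosure SF := by
  rw [span_monomial_image_eq_restrictSupportIdeal, span_monomial_image_eq_restrictSupportIdeal,
    yIdeal_pow_eq_restrictSupportIdeal] at h
  obtain ⟨z, hz, hzF⟩ := SetLike.not_le_iff_exists.mp h
  have hle : restrictSupportIdeal k (upperClosure SE : Set _) (upperClosure SE).upper *
      restrictSupportIdeal k {α | e ≤ ydeg α} (isUpperSet_ydeg_le e) ≤
      restrictSupportIdeal k ((upperClosure SE : Set (Fin (m + 2) →₀ ℕ)) ∩ {α | a + e ≤ ydeg α})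
        ((upperClosure SE).upper.inter (isUpperSet_ydeg_le _)) := by
    refine restrictSupportIdeal_mul_le _ _ _ (Set.add_subset_iff.mpr ?_)
    rintro β ⟨σ, hσ, hσβ⟩ γ hγ
    refine ⟨(upperClosure SE).upper le_self_add ⟨σ, hσ, hσβ⟩, ?_⟩
    have := ydeg_mono hσβ
    rw [(hSE hσ).2.2] at this
    rw [Set.mem_ofPred_eq, ydeg_add]
    exact add_le_add this hγ
  obtain ⟨α, hαz, hαF⟩ := Set.not_subset.mp hzF
  obtain ⟨hαE, hα⟩ := hle hz hαz
  exact ⟨α, hαE, hα, hαF⟩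

end Denominator

open MvPolynomial in
/-- In `S = k[x₁, x₂, y₁, …, y_m]` (here `x₁ = X 0`, `x₂ = X 1`, `y_i = X (i+2)`), with
`P = (y₁, …, y_m)`, `c ≥ 1`, and ideals `E`, `F` generated by monomials of degree `d·n`
in the `y`'s such that `E·P^{d-1} ⊄ F`, one has
`reg P^{dn}/(x₁P^{dn}, x₂^c E, F, P^{d(n+1)}) = d(n+1) + c - 2`.
(`G` is the standard grading of `S`.) -/
theorem stmt6 (m d : ℕ) (hd : 1 ≤ d) (cc : ℕ) (hcc : 1 ≤ cc) (n : ℕ)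
    (P : Ideal (MvPolynomial (Fin (m + 2)) k))
    (hP : P = Ideal.span (Set.range fun i : Fin m =>
      (X i.succ.succ : MvPolynomial (Fin (m + 2)) k)))
    (E F : Ideal (MvPolynomial (Fin (m + 2)) k))
    (hE : ∃ TE : Set (MvPolynomial (Fin (m + 2)) k),
      (∀ q ∈ TE, ∃ a : Fin m → ℕ, (∑ i, a i) = d * n ∧ q = ∏ i, X i.succ.succ ^ a i) ∧
      E = Ideal.span TE)
    (hF : ∃ TF : Set (MvPolynomial (Fin (m + 2)) k),
      (∀ q ∈ TF, ∃ a : Fin m → ℕ, (∑ i, a i) = d * n ∧ q = ∏ i, X i.succ.succ ^ a i) ∧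
      F = Ideal.span TF)
    (hEF : ¬ E * P ^ (d - 1) ≤ F)
    (G : StdGraded k (MvPolynomial (Fin (m + 2)) k))
    (hdeg : ∀ j : ℤ, G.deg j =
      if 0 ≤ j then homogeneousSubmodule (Fin (m + 2)) k j.toNat else ⊥) :
    reg G (P ^ (d * n))
        (Ideal.span {X (0 : Fin (m + 2))} * P ^ (d * n) ⊔
          Ideal.span {X (1 : Fin (m + 2)) ^ cc} * E ⊔ F ⊔ P ^ (d * (n + 1))) =
      (d : ℤ) * (n + 1) + cc - 2 := by
  obtain ⟨SE, hSE, rfl⟩ := exists_yExponents_of_prod_X_pow hE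
  obtain ⟨SF, hSF, rfl⟩ := exists_yExponents_of_prod_X_pow hF
  obtain rfl : P = yIdeal k m := hP
  have hb : d * (n + 1) = d * n + d := by ring
  obtain ⟨α, hαE, hα, hαF⟩ := exists_exponent_of_not_mul_le hSE hEF
  obtain ⟨w, hwA, hwdeg, hwB, hwm⟩ := exists_socle_exponent (b := d * (n + 1)) (c := cc)
    (by omega) hcc hSE hSF hαE (by omega) hαF
  rw [← denomIdeal_eq hSE, reg_eq_of_X_mul_bijective G (fun N => by simp [hdeg]) _ _
    (d * (n + 1) + cc - 2) 1
    (fun N hN p hp hh => exists_sub_X_one_mul_mem_denomIdeal hcc (by omega) hp hh)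
    (fun N hN p hp hh => mem_denomIdeal_of_X_one_mul_mem hSE hSF (by omega) hp hh)
    (monomial_one_mem_yIdeal_pow.mpr hwA) (isHomogeneous_monomial _ hwdeg)
    (fun i => ?_) (fun hw => hwB (monomial_one_mem_restrictSupportIdeal.mp hw))]
  · push_cast [hb, show 2 ≤ d * n + d + cc by omega]
    ring
  · rw [X, monomial_mul, one_mul]
    exact monomial_one_mem_restrictSupportIdeal.mpr (hwm _ (by rw [Finsupp.degree_single]))
end
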